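/- arXiv:1902.04908 — 6 statements merged into one kernel-verified Lean document; each statement's English description precedes it below -/
import Mathlib

section
/- Let G be a finite group with identity e and let S be a subset of G containing e such that |S| divides |G|. Suppose there exist a finite group H with identity e' and a bijection φ : H → S such that φ(e') = e and Θ_G(S) = φ̂(Θ(H)^{|G|/|H|}). Then S is a subgroup of G, φ is either a group isomorphism or a group anti-isomorphism from H onto S (i.e., either φ(h h') = φ(h) φ(h') for all h, h' ∈ H, or φ(h h') = φ(h') φ(h) for all h, h' ∈ H), and in particular the subgroup S is isomorphic to H. -/
/-- The group determinant `Θ(G)` of a finite group `G`. -/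
noncomputable def groupDet (R G : Type*) [CommRing R] [Group G] [Finite G] :
    MvPolynomial G R := by
  classical
  letI := Fintype.ofFinite G
  exact Matrix.det (Matrix.of fun g h : G => MvPolynomial.X (g * h⁻¹))

/-- The generalized group determinant `Θ_G(S)` of a finite group `G` to a subset `S ⊆ G`. -/
noncomputable def genGroupDet (R G : Type*) [CommRing R] [Group G] [Finite G] (S : Set G) :
    MvPolynomial S R := by
  classical
  letI := Fintype.ofFinite G
  exact Matrix.det (Matrix.of fun g h : G =>
    if hm : g * h⁻¹ ∈ S then MvPolynomial.X (⟨g * h⁻¹, hm⟩ : S) else 0)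

/-!
Write `ι = val ∘ φ : H → G` and expand both determinants over permutations: the term of
`σ ∈ Sym(G)` in `Θ_G(S)` is zero or a signed monomial in the displacements `σ g * g⁻¹`, and the
term of `τ ∈ Sym(H)` in `φ̂ Θ(H)` is a signed monomial in the `ι (τ h * h⁻¹)`. Let
`m = |G| / |H|`. If `τ` moves at most three points, every way of writing the monomial of `τ`
times `x_e ^ ((m - 1) |H|)` as a product of `m` terms of `φ̂ Θ(H)` uses the identity in all
factors but one, and in that one a permutation moving as many points as `τ`, hence of the same
sign. So this monomial survives in `φ̂ Θ(H) ^ m = Θ_G(S)`, i.e. it is the monomial of some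
`σ ∈ Sym(G)`, which has the same nontrivial displacements as `τ`.

For the transposition `(1 h)` this gives `ι h⁻¹ = (ι h)⁻¹`, since the two nontrivial
displacements of a transposition are mutually inverse. For the 3-cycle `1 ↦ y ↦ x * y ↦ 1`, with
displacements `y, x, (x * y)⁻¹`, it gives `ι (x * y) ∈ {ι x * ι y, ι y * ι x}`, since the
displacements of a 3-cycle multiply to `1` in cyclic order. An injective map with the latter
property is a homomorphism or an anti-homomorphism by Scott's theorem on half-homomorphisms.
-/

open Function Finset Equiv Equiv.Perm MvPolynomial

def IsHalfHom {H G : Type*} [Mul H] [Mul G] (f : H → G) : Prop :=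
  ∀ x y, f (x * y) = f x * f y ∨ f (x * y) = f y * f x

namespace IsHalfHom

variable {H G : Type*} [Group H] [Group G] {f : H → G}

lemma comp_unop (hf : IsHalfHom f) : IsHalfHom (f ∘ MulOpposite.unop) :=
  fun x y => (hf y.unop x.unop).symm

lemma map_mul_self (hf : IsHalfHom f) (x : H) : f (x * x) = f x * f x :=
  (hf x x).elim id id

lemma commute_of_map_mul (hf : IsHalfHom f) {x y : H} (hxy : Commute x y)
    (hp : f (x * y) = f x * f y) : Commute (f x) (f y) := by
  by_contra hne
  have hxyy : f (x * (y * y)) = f x * (f y * f y) := by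
    rcases hf x (y * y) with h | h
    · rw [h, hf.map_mul_self]
    rcases hf (x * y) y with h' | h'
    · rw [← mul_assoc, h', hp, mul_assoc]
    rw [← mul_assoc, h', hf.map_mul_self, hp] at h
    simp only [mul_assoc, mul_right_inj] at h
    exact absurd h hne
  have hsq : f (x * (x * (y * y))) = f x * f y * (f x * f y) := by
    rw [← hp, ← hf.map_mul_self, mul_assoc, hxy.symm.left_comm]
  rcases hf x (x * (y * y)) with h | h <;> rw [hxyy, hsq] at h <;>
    simp only [mul_assoc, mul_right_inj] at h
  · simp only [← mul_assoc, mul_left_inj] at h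
    exact hne h.symm
  · exact hne h

lemma commute (hf : IsHalfHom f) {x y : H} (hxy : Commute x y) : Commute (f x) (f y) := by
  rcases hf x y with h | h
  · exact hf.commute_of_map_mul hxy h
  · exact (hf.commute_of_map_mul hxy.symm (by rw [← hxy.eq, h])).symm

variable (hinj : Injective f)
include hinj

lemma map_mul_symm (hf : IsHalfHom f) {x y : H} (h : f (x * y) = f x * f y) :
    f (y * x) = f y * f x := by
  rcases hf y x with h' | h'
  · exact h'
  rw [h', (hf.commute (hinj (h'.trans h.symm) : Commute y x)).eq]

lemma map_mul_rev_symm (hf : IsHalfHom f) {x y : H} (h : f (x * y) = f y * f x) :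
    f (y * x) = f x * f y := by
  rcases hf y x with h' | h'
  · rw [h', (hf.commute (hinj (h'.trans h.symm) : Commute y x)).eq]
  · exact h'

lemma mul_mul_eq_of_map_mul_of_map_mul_rev (hf : IsHalfHom f) {a b x : H}
    (hab : f (a * b) = f a * f b) (hnab : ¬Commute (f a) (f b))
    (hax : f (a * x) = f x * f a) (hnax : ¬Commute (f a) (f x)) :
    f b * (f a * f x) = f x * (f a * f b) := by
  by_contra hne
  have hba := hf.map_mul_symm hinj hab
  have hxa := hf.map_mul_rev_symm hinj hax
  have hxb : Commute (f x) (f b) := by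
    have e : f (b * (a * x)) = f (b * a * x) := by rw [mul_assoc]
    rcases hf (b * a) x with h1 | h1 <;> rcases hf b (a * x) with h2 | h2 <;>
      rw [h1, h2, hba, hax] at e
    · simp only [mul_assoc, mul_right_inj] at e
      exact absurd e.symm hnax
    · exact absurd (by simpa only [mul_assoc] using e.symm) hne
    · simp only [← mul_assoc, mul_left_inj] at e
      exact e.symm
    · simp only [mul_assoc, mul_right_inj] at e
      exact absurd e hnab
  have hbx : f (b * x) = f b * f x := (hf b x).elim id fun h => h.trans hxb.eq
  have hxab : f (x * (a * b)) = f (a * b) * f x := by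
    refine (hf x (a * b)).resolve_left fun h => ?_
    have e := hf (x * a) b
    rw [mul_assoc, h, hab, hxa] at e
    rcases e with e | e
    · simp only [← mul_assoc, mul_left_inj] at e
      exact hnax e.symm
    · exact hne (by simpa only [mul_assoc] using e.symm)
  have habx := hf.map_mul_rev_symm hinj hxab
  rcases hf a (b * x) with h | h <;> rw [← mul_assoc, habx, hbx, hab, ← hxb.eq] at h
  · simp only [← mul_assoc, mul_left_inj] at h
    exact hnax h.symm
  · simp only [mul_assoc, mul_right_inj] at h
    exact hnab h

lemma map_mul_mul_self_of_map_mul (hf : IsHalfHom f) {a b : H}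
    (hab : f (a * b) = f a * f b) (hnab : ¬Commute (f a) (f b)) :
    f (b * (a * a)) = f b * (f a * f a) := by
  have hba := hf.map_mul_symm hinj hab
  rcases hf b (a * a) with h | h
  · rw [h, hf.map_mul_self]
  rcases hf (b * a) a with h' | h'
  · rw [← mul_assoc, h', hba, mul_assoc]
  rw [← mul_assoc, h', hba, hf.map_mul_self] at h
  simp only [mul_assoc, mul_right_inj] at h
  exact absurd h.symm hnab

lemma map_mul_of_map_mul_of_not_commute (hf : IsHalfHom f) {a b : H}
    (hab : f (a * b) = f a * f b) (hnab : ¬Commute (f a) (f b)) (x : H) :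
    f (a * x) = f a * f x := by
  refine (hf a x).elim id fun hax => ?_
  by_cases hc : Commute (f a) (f x)
  · exact hax.trans hc.eq.symm
  have key := hf.mul_mul_eq_of_map_mul_of_map_mul_rev hinj hab hnab hax hc
  have hba := hf.map_mul_symm hinj hab
  have hbaax : f (b * a * (a * x)) = f b * f a * f x * f a := by
    rcases hf (b * a) (a * x) with h | h <;> rw [h, hba, hax]
    · simp only [mul_assoc]
    · rw [mul_assoc (f b), key]; simp only [mul_assoc]
  have e : b * a * (a * x) = b * (a * a) * x := by simp only [mul_assoc]
  rw [e] at hbaax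
  rcases hf (b * (a * a)) x with h | h <;>
    rw [hbaax, hf.map_mul_mul_self_of_map_mul hinj hab hnab] at h
  · simp only [mul_assoc, mul_right_inj] at h
    exact absurd h.symm hc
  · have hbaxa : f b * f a * f x * f a = f x * (f a * f b) * f a := by
      rw [← key]; simp only [mul_assoc]
    rw [hbaxa] at h
    simp only [mul_assoc, mul_right_inj] at h
    simp only [← mul_assoc, mul_left_inj] at h
    exact absurd h hnab

lemma map_mul_rev_of_map_mul_rev_of_not_commute (hf : IsHalfHom f) {u v : H}
    (hvu : f (v * u) = f u * f v) (hnuv : ¬Commute (f u) (f v)) (t : H) :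
    f (t * u) = f u * f t :=
  hf.comp_unop.map_mul_of_map_mul_of_not_commute (hinj.comp MulOpposite.unop_injective)
    (a := .op u) (b := .op v) hvu hnuv (.op t)

lemma forall_map_mul_of_not_commute (hf : IsHalfHom f) {a b : H}
    (hab : f (a * b) = f a * f b) (hnab : ¬Commute (f a) (f b)) (x y : H) :
    f (x * y) = f x * f y := by
  refine (hf x y).elim id fun hxy => ?_
  by_cases hc : Commute (f x) (f y)
  · exact hxy.trans hc.eq.symm
  have hbt := hf.map_mul_of_map_mul_of_not_commute hinj (hf.map_mul_symm hinj hab)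
    (fun h => hnab h.symm)
  have htx := hf.map_mul_rev_of_map_mul_rev_of_not_commute hinj
    (hf.map_mul_rev_symm hinj hxy) hc
  have hay : Commute (f a) (f y) :=
    ((hf.map_mul_of_map_mul_of_not_commute hinj hab hnab y).symm.trans
      (hf.map_mul_rev_of_map_mul_rev_of_not_commute hinj hxy (fun h => hc h.symm) a))
  have hxb : Commute (f x) (f b) :=
    (hf.map_mul_symm hinj (hbt x)).symm.trans (hf.map_mul_rev_symm hinj (htx b))
  have e : f (a * x * (b * y)) = f a * (f b * f y * f x) := by
    rw [mul_assoc, hf.map_mul_of_map_mul_of_not_commute hinj hab hnab,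
      hf.map_mul_rev_symm hinj (htx _), hbt]
  rcases hf (a * x) (b * y) with h | h <;>
    rw [e, hf.map_mul_of_map_mul_of_not_commute hinj hab hnab, hbt] at h
  · rw [mul_assoc (f a), ← mul_assoc (f x), hxb.eq] at h
    simp only [mul_assoc, mul_right_inj] at h
    exact absurd h.symm hc
  · simp only [mul_assoc] at h
    rw [← mul_assoc (f y) (f a), ← hay.eq] at h
    simp only [← mul_assoc, mul_left_inj] at h
    exact absurd h hnab

theorem map_mul_or_map_mul_rev (hf : IsHalfHom f) :
    (∀ x y, f (x * y) = f x * f y) ∨ (∀ x y, f (x * y) = f y * f x) := by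
  by_cases h : ∃ a b, f (a * b) = f a * f b ∧ ¬Commute (f a) (f b)
  · obtain ⟨a, b, hab, hnab⟩ := h
    exact .inl (hf.forall_map_mul_of_not_commute hinj hab hnab)
  · push Not at h
    exact .inr fun x y => (hf x y).elim (fun hxy => hxy.trans (h x y hxy).eq) id

end IsHalfHom

lemma exists_monoidHom_range_eq_of_map_mul_or_map_mul_rev {H G : Type*} [Group H] [Group G]
    {f : H → G} (hinj : Injective f)
    (hf : (∀ x y, f (x * y) = f x * f y) ∨ ∀ x y, f (x * y) = f y * f x) :
    ∃ ψ : H →* G, Injective ψ ∧ Set.range ψ = Set.range f := by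
  rcases hf with hf | hf
  · exact ⟨.mk' f hf, hinj, rfl⟩
  · refine ⟨.mk' (f ∘ Inv.inv) fun x y => ?_, hinj.comp inv_injective,
      inv_surjective.range_comp f⟩
    simp only [comp_apply, mul_inv_rev, hf]

lemma eq_inv_of_multiset_pair_eq {G : Type*} [Group G] {u a b : G}
    (h : ({u, u⁻¹} : Multiset G) = {a, b}) : b = a⁻¹ := by
  have h := Multiset.coe_eq_coe.mp h
  rw [← List.mem_permutations] at h
  simp only [List.permutations, List.permutationsAux, List.foldr_cons, List.permutationsAux.rec,
    List.foldr_nil, List.permutationsAux2_snd_nil, List.permutationsAux2_snd_cons, List.append_nil,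
    id_eq, List.mem_cons, List.cons.injEq, and_true, List.not_mem_nil, or_false] at h
  rcases h with ⟨rfl, rfl⟩ | ⟨rfl, rfl⟩ <;> simp

lemma mul_mul_eq_one_or_of_multiset_triple_eq {G : Type*} [Group G] {u v w a b c : G}
    (h : ({u, v, w} : Multiset G) = {a, b, c}) (huvw : w * v * u = 1) :
    c * b * a = 1 ∨ a * b * c = 1 := by
  obtain rfl : w = (v * u)⁻¹ := eq_inv_of_mul_eq_one_left (by rwa [← mul_assoc])
  have h := Multiset.coe_eq_coe.mp h
  rw [← List.mem_permutations] at h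
  simp only [List.permutations, List.permutationsAux, List.foldr_cons, List.permutationsAux.rec,
    List.foldr_nil, List.permutationsAux2_snd_nil, List.permutationsAux2_snd_cons, List.append_nil,
    id_eq, List.cons_append, List.nil_append, mul_inv_rev, List.mem_cons, List.cons.injEq, and_true,
    List.not_mem_nil, or_false] at h
  rcases h with ⟨rfl, rfl, rfl⟩ | ⟨rfl, rfl, rfl⟩ | ⟨rfl, rfl, rfl⟩ | ⟨rfl, rfl, rfl⟩ |
    ⟨rfl, rfl, rfl⟩ | ⟨rfl, rfl, rfl⟩ <;> [left; right; right; left; left; right] <;> group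

section Displacements

variable {K G : Type*} [Group K] [Fintype K]

def displacements (j : K → G) (τ : Perm K) : Multiset G :=
  univ.val.map fun h => j (τ h * h⁻¹)

variable [DecidableEq K]

def supportDisplacements (j : K → G) (τ : Perm K) : Multiset G :=
  τ.support.val.map fun h => j (τ h * h⁻¹)

lemma supportDisplacements_one (j : K → G) : supportDisplacements j 1 = 0 := by
  simp [supportDisplacements]

lemma card_supportDisplacements (j : K → G) (τ : Perm K) :
    Multiset.card (supportDisplacements j τ) = #τ.support :=
  Multiset.card_map _ _

lemma Equiv.Perm.IsThreeCycle.supportDisplacements_eq {τ : Perm K} (hτ : τ.IsThreeCycle)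
    {a : K} (ha : a ∈ τ.support) (j : K → G) :
    supportDisplacements j τ =
      {j (τ a * a⁻¹), j (τ (τ a) * (τ a)⁻¹), j (a * (τ (τ a))⁻¹)} := by
  have hnodup := hτ.nodup_iff_mem_support.mpr ha
  have h3 : (τ ^ 3) a = a := by rw [← hτ.orderOf, pow_orderOf_eq_one, one_apply]
  simp only [pow_succ, pow_zero, one_mul, mul_apply] at h3
  simp_all [supportDisplacements, hτ.support_eq_iff_mem_support.mpr ha]

lemma supportDisplacements_swap {p q : K} (hpq : p ≠ q) (j : K → G) :
    supportDisplacements j (swap p q) = {j (q * p⁻¹), j (p * q⁻¹)} := by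
  rw [supportDisplacements, support_swap hpq, insert_val_of_notMem (by simpa using hpq)]
  simp

variable [Group G] [DecidableEq G] {j : K → G}

lemma filter_displacements (hj : Injective j) (hj1 : j 1 = 1) (τ : Perm K) :
    (displacements j τ).filter (· ≠ 1) = supportDisplacements j τ := by
  rw [displacements, supportDisplacements, Multiset.filter_map, Perm.support, filter_val]
  congr 2
  ext h
  simp [← hj1, hj.eq_iff, mul_inv_eq_one]

lemma countP_displacements (hj : Injective j) (hj1 : j 1 = 1) (τ : Perm K) :
    (displacements j τ).countP (· ≠ 1) = #τ.support := by
  rw [Multiset.countP_eq_card_filter, filter_displacements hj hj1, supportDisplacements,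
    Multiset.card_map, card_val]

end Displacements

section Determinants

variable {R K G : Type*} [CommRing R] [Group K] [Fintype K] [DecidableEq K] [DecidableEq G]

lemma prod_X_eq_monomial {ι σ : Type*} [DecidableEq σ] (s : Finset ι) (f : ι → σ) :
    ∏ i ∈ s, (X (f i) : MvPolynomial σ R) = monomial (Multiset.toFinsupp (s.val.map f)) 1 := by
  induction s using Finset.cons_induction with
  | empty => simp
  | cons a s ha ih =>
    rw [prod_cons, ih, cons_val, Multiset.map_cons, ← Multiset.singleton_add,
      Multiset.toFinsupp_add, Multiset.toFinsupp_singleton, X, monomial_mul, one_mul]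

lemma groupDet_eq : groupDet R K = (Matrix.of fun g h : K => X (g * h⁻¹)).det := by
  unfold groupDet
  congr!

lemma rename_groupDet (j : K → G) :
    rename j (groupDet R K) =
      ∑ τ : Perm K, monomial (Multiset.toFinsupp (displacements j τ)) ((sign τ : ℤ) : R) := by
  rw [groupDet_eq, Matrix.det_apply', map_sum]
  refine sum_congr rfl fun τ _ => ?_
  simp only [map_mul, map_intCast, map_prod, Matrix.of_apply, rename_X]
  rw [prod_X_eq_monomial, ← map_intCast (C : R →+* MvPolynomial G R), C_mul_monomial, mul_one]
  rfl

omit [DecidableEq K] in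
lemma exists_perm_of_coeff_rename_genGroupDet_ne_zero [Group G] [Fintype G] {S : Set G}
    {ν : G →₀ ℕ} (h : coeff ν (rename Subtype.val (genGroupDet R G S)) ≠ 0) :
    ∃ σ : Perm G, Multiset.toFinsupp (displacements id σ) = ν := by
  classical
  have hdet : genGroupDet R G S = (Matrix.of fun g h : G =>
      if hm : g * h⁻¹ ∈ S then X (⟨g * h⁻¹, hm⟩ : S) else 0).det := by
    unfold genGroupDet
    congr!
  have hentry (g h : G) :
      rename Subtype.val (if hm : g * h⁻¹ ∈ S then X (⟨g * h⁻¹, hm⟩ : S) else 0) =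
        if g * h⁻¹ ∈ S then (X (g * h⁻¹) : MvPolynomial G R) else 0 := by
    split_ifs <;> simp
  rw [hdet, Matrix.det_apply', map_sum, coeff_sum] at h
  obtain ⟨σ, -, hσ⟩ := exists_ne_zero_of_sum_ne_zero h
  refine ⟨σ, by_contra fun hne => hσ ?_⟩
  simp only [map_mul, map_intCast, map_prod, Matrix.of_apply, hentry, Fintype.prod_ite_zero]
  split_ifs
  · rw [prod_X_eq_monomial, ← map_intCast (C : R →+* MvPolynomial G R), C_mul_monomial,
      coeff_monomial]
    exact if_neg hne
  · simp

end Determinants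

section Sign

variable {α : Type*} [Fintype α] [DecidableEq α]

lemma sign_eq_sign_of_card_support_eq {σ τ : Perm α} (h : #σ.support = #τ.support)
    (h3 : #τ.support ≤ 3) : sign σ = sign τ := by
  have key (π : Perm α) (hπ : #π.support ≤ 3) : sign π = if #π.support = 2 then -1 else 1 := by
    interval_cases hc : #π.support
    · simp [support_eq_empty_iff.mp (card_eq_zero.mp hc)]
    · exact absurd hc (card_support_ne_one π)
    · obtain ⟨x, y, hxy, rfl⟩ := card_support_eq_two.mp hc
      simp [sign_swap hxy]
    · simp [(card_support_eq_three_iff.mp hc).sign]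
  rw [key σ (h ▸ h3), key τ h3, h]

lemma prod_sign_eq_of_sum_card_support_eq {ι : Type*} [Fintype ι] [DecidableEq ι]
    (t : ι → Perm α) {τ : Perm α} (h : ∑ i, #(t i).support = #τ.support)
    (h3 : #τ.support ≤ 3) : ∏ i, sign (t i) = sign τ := by
  by_cases ht : ∀ i, t i = 1
  · have hτ : τ = 1 := by simpa [ht, eq_comm (a := 0)] using h
    simp [ht, hτ]
  push Not at ht
  obtain ⟨i, hi⟩ := ht
  have hrest : ∀ k ≠ i, t k = 1 := by
    intro k hk
    by_contra hne
    have hpair : #(t i).support + #(t k).support ≤ ∑ i, #(t i).support := by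
      rw [← sum_pair (f := fun i => #(t i).support) hk.symm]
      exact sum_le_sum_of_subset (subset_univ _)
    have := two_le_card_support_of_ne_one hi
    have := two_le_card_support_of_ne_one hne
    omega
  rw [prod_eq_single i (fun k _ hk => by rw [hrest k hk, map_one]) (by simp)]
  refine sign_eq_sign_of_card_support_eq ?_ h3
  rwa [sum_eq_single i (fun k _ hk => by rw [hrest k hk, Perm.support_one, card_empty])
    (by simp)] at h

end Sign

section Coefficient

variable {R K G : Type*} [CommRing R] [CharZero R] [Group K] [Fintype K] [DecidableEq K]
  [Group G] [DecidableEq G] {j : K → G}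

lemma coeff_rename_groupDet_pow_ne_zero (hj : Injective j) (hj1 : j 1 = 1) {τ₀ : Perm K}
    (hτ₀ : #τ₀.support ≤ 3) (m : ℕ) :
    coeff (Multiset.toFinsupp (displacements j τ₀ + m • displacements j 1))
      (rename j (groupDet R K) ^ (m + 1)) ≠ 0 := by
  set ν := displacements j τ₀ + m • displacements j 1
  have hsign (t : Fin (m + 1) → Perm K) (ht : ∑ i, displacements j (t i) = ν) :
      ∏ i, sign (t i) = sign τ₀ := by
    refine prod_sign_eq_of_sum_card_support_eq t ?_ hτ₀
    have := congrArg (Multiset.countPAddMonoidHom (· ≠ (1 : G))) ht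
    simpa [ν, map_sum, countP_displacements hj hj1] using this
  have hν : ∑ i, displacements j ((Fin.cons τ₀ fun _ => 1 : Fin (m + 1) → Perm K) i) = ν := by
    simp [Fin.sum_univ_succ, ν]
  rw [rename_groupDet, ← Fin.prod_const, prod_univ_sum, Fintype.piFinset_univ, coeff_sum]
  simp_rw [← monomial_sum_prod, coeff_monomial, ← map_sum, EmbeddingLike.apply_eq_iff_eq]
  have hterm (t : Fin (m + 1) → Perm K) :
      (if ∑ i, displacements j (t i) = ν then ∏ i, ((sign (t i) : ℤ) : R) else 0) =
        if ∑ i, displacements j (t i) = ν then ((sign τ₀ : ℤ) : R) else 0 := by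
    split_ifs with ht
    · rw [← hsign t ht, Units.coe_prod, Int.cast_prod]
    · rfl
  rw [sum_congr rfl fun t _ => hterm t, ← sum_filter, sum_const, nsmul_eq_mul, ← Int.cast_natCast,
    ← Int.cast_mul, Int.cast_ne_zero]
  refine mul_ne_zero ?_ (Units.ne_zero _)
  exact Int.natCast_ne_zero.mpr (card_ne_zero.mpr ⟨_, mem_filter.mpr ⟨mem_univ _, hν⟩⟩)

end Coefficient

section DeterminantIdentity

variable {R G H : Type*} [CommRing R] [CharZero R] [Group G] [Fintype G] [DecidableEq G]
  [Group H] [Fintype H] [DecidableEq H] {S : Set G} {ι : H → G} {m : ℕ}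
  (hpoly : rename Subtype.val (genGroupDet R G S) = rename ι (groupDet R H) ^ (m + 1))
  (hι : Injective ι) (hι1 : ι 1 = 1)
include hpoly hι hι1

lemma exists_perm_supportDisplacements_eq {τ : Perm H} (hτ : #τ.support ≤ 3) :
    ∃ σ : Perm G, supportDisplacements id σ = supportDisplacements ι τ := by
  have hcoeff := coeff_rename_groupDet_pow_ne_zero (R := R) hι hι1 hτ m
  rw [← hpoly] at hcoeff
  obtain ⟨σ, hσ⟩ := exists_perm_of_coeff_rename_genGroupDet_ne_zero hcoeff
  refine ⟨σ, ?_⟩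
  have := congrArg (Multiset.filter (· ≠ 1)) (Multiset.toFinsupp.injective hσ)
  rwa [Multiset.filter_add, Multiset.filter_nsmul, filter_displacements injective_id rfl,
    filter_displacements hι hι1, filter_displacements hι hι1, supportDisplacements_one,
    nsmul_zero, add_zero] at this

lemma map_inv_of_rename_genGroupDet_eq (h : H) : ι h⁻¹ = (ι h)⁻¹ := by
  rcases eq_or_ne h 1 with rfl | hh
  · simp [hι1]
  have hτ : #(swap 1 h).support = 2 := by rw [support_swap hh.symm, card_pair hh.symm]
  obtain ⟨σ, hσ⟩ := exists_perm_supportDisplacements_eq hpoly hι hι1 (hτ.trans_le (by norm_num))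
  have hσ2 : #σ.support = 2 := by
    rw [← card_supportDisplacements id, hσ, card_supportDisplacements, hτ]
  obtain ⟨p, q, hpq, rfl⟩ := card_support_eq_two.mp hσ2
  rw [supportDisplacements_swap hpq, supportDisplacements_swap hh.symm,
    show p * q⁻¹ = (q * p⁻¹)⁻¹ by group] at hσ
  simpa using eq_inv_of_multiset_pair_eq hσ

lemma isHalfHom_of_rename_genGroupDet_eq : IsHalfHom ι := by
  intro x y
  rcases eq_or_ne x 1 with rfl | hx
  · simp [hι1]
  rcases eq_or_ne y 1 with rfl | hy
  · simp [hι1]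
  rcases eq_or_ne (x * y) 1 with hxy | hxy
  · left
    rw [hxy, hι1, eq_inv_of_mul_eq_one_right hxy, map_inv_of_rename_genGroupDet_eq hpoly hι hι1,
      mul_inv_cancel]
  have hxyy : x * y ≠ y := fun h => hx (by simpa using h)
  set τ := swap 1 (x * y) * swap 1 y
  have hτ : τ.IsThreeCycle := isThreeCycle_swap_mul_swap_same hxy.symm hy.symm hxyy
  have hτ1 : τ 1 = y := by simp [τ, swap_apply_of_ne_of_ne hy hxyy.symm]
  have hτy : τ y = x * y := by simp [τ]
  obtain ⟨σ, hσ⟩ := exists_perm_supportDisplacements_eq hpoly hι hι1 hτ.card_support.le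
  have hσ3 : σ.IsThreeCycle := card_support_eq_three_iff.mp (by
    rw [← card_supportDisplacements id, hσ, card_supportDisplacements, hτ.card_support])
  obtain ⟨p, hp⟩ := card_pos.mp (hσ3.card_support ▸ three_pos)
  rw [hσ3.supportDisplacements_eq hp, hτ.supportDisplacements_eq (mem_support.mpr (hτ1 ▸ hy)),
    hτ1, hτy] at hσ
  simp only [id, inv_one, mul_one, one_mul, mul_inv_cancel_right,
    map_inv_of_rename_genGroupDet_eq hpoly hι hι1] at hσ
  rcases mul_mul_eq_one_or_of_multiset_triple_eq hσ (by group) with h | h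
  · rw [mul_assoc, inv_mul_eq_one] at h
    exact .inl h
  · exact .inr (mul_inv_eq_one.mp h).symm

end DeterminantIdentity

theorem genGroupDet_eq_pow_imp_subgroup_and_iso_general {G : Type*} [Group G] [Fintype G]
    (S : Set G) (h1S : (1 : G) ∈ S)
    (H : Type*) [Group H] [Fintype H] (φ : H → S)
    (hbij : Function.Bijective φ) (h1 : φ 1 = ⟨1, h1S⟩)
    (hdet : genGroupDet ℂ G S =
      MvPolynomial.rename φ ((groupDet ℂ H) ^ (Fintype.card G / Fintype.card H))) :
    ((∀ a ∈ S, ∀ b ∈ S, a * b ∈ S) ∧ ∀ a ∈ S, a⁻¹ ∈ S) ∧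
    ((∀ h h' : H, (φ (h * h') : G) = (φ h : G) * (φ h' : G)) ∨
      (∀ h h' : H, (φ (h * h') : G) = (φ h' : G) * (φ h : G))) ∧
    (∃ ψ : H → G, Function.Injective ψ ∧ Set.range ψ = S ∧
      ∀ h h' : H, ψ (h * h') = ψ h * ψ h') := by
  classical
  set ι : H → G := fun h => (φ h : G)
  have hι : Injective ι := Subtype.val_injective.comp hbij.1
  have hι1 : ι 1 = 1 := congrArg Subtype.val h1
  have hrange : Set.range ι = S := by
    rw [show ι = Subtype.val ∘ φ from rfl, Set.range_comp, hbij.2.range_eq, Set.image_univ,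
      Subtype.range_coe]
  obtain ⟨m, hm⟩ : ∃ m, Fintype.card G / Fintype.card H = m + 1 :=
    Nat.exists_eq_add_one_of_ne_zero
      (Nat.div_pos (Fintype.card_le_of_injective ι hι) Fintype.card_pos).ne'
  have hpoly : rename Subtype.val (genGroupDet ℂ G S) = rename ι (groupDet ℂ H) ^ (m + 1) := by
    rw [hdet, hm, map_pow, map_pow, rename_rename]
    rfl
  have hhom := (isHalfHom_of_rename_genGroupDet_eq hpoly hι hι1).map_mul_or_map_mul_rev hι
  obtain ⟨ψ, hψ, hψS⟩ := exists_monoidHom_range_eq_of_map_mul_or_map_mul_rev hι hhom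
  rw [hrange] at hψS
  refine ⟨⟨?_, ?_⟩, hhom, ψ, hψ, hψS, map_mul ψ⟩
  · simp only [← hψS, Set.forall_mem_range, ← map_mul]
    exact fun a b => Set.mem_range_self _
  · simp only [← hψS, Set.forall_mem_range, ← map_inv]
    exact fun a => Set.mem_range_self _

/-- If `S ⊆ G` contains `e`, `|S| ∣ |G|`, and there are a finite group `H` and a bijection
`φ : H → S` with `φ(e') = e` and `Θ_G(S) = φ̂(Θ(H)^{|G|/|H|})`, then `S` is a subgroup of `G`,
`φ` is a group isomorphism or group anti-isomorphism onto `S`, and `S` is isomorphic to `H`. -/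
theorem genGroupDet_eq_pow_imp_subgroup_and_iso {G : Type*} [Group G] [Fintype G]
    (S : Set G) (h1S : (1 : G) ∈ S) (hdvd : Nat.card S ∣ Fintype.card G)
    (H : Type*) [Group H] [Fintype H] (φ : H → S)
    (hbij : Function.Bijective φ) (h1 : φ 1 = ⟨1, h1S⟩)
    (hdet : genGroupDet ℂ G S =
      MvPolynomial.rename φ ((groupDet ℂ H) ^ (Fintype.card G / Fintype.card H))) :
    ((∀ a ∈ S, ∀ b ∈ S, a * b ∈ S) ∧ ∀ a ∈ S, a⁻¹ ∈ S) ∧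
    ((∀ h h' : H, (φ (h * h') : G) = (φ h : G) * (φ h' : G)) ∨
      (∀ h h' : H, (φ (h * h') : G) = (φ h' : G) * (φ h : G))) ∧
    (∃ ψ : H → G, Function.Injective ψ ∧ Set.range ψ = S ∧
      ∀ h h' : H, ψ (h * h') = ψ h * ψ h') :=
  genGroupDet_eq_pow_imp_subgroup_and_iso_general S h1S H φ hbij h1 hdet
end

section
/- Let G be a finite group and let S be a subgroup of G. Then the generalized group determinant of G to S equals the (|G|/|S|)-th power of the group determinant of S: Θ_G(S) = Θ(S)^{|G|/|S|}, where Θ(S) is the group determinant of the group S computed in the same variables x_s (s ∈ S). -/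
noncomputable def cosetEquiv {G : Type*} [Group G] (S : Subgroup G) :
    S × (G ⧸ S) ≃ G where
  toFun p := p.2.out * (p.1 : G)
  invFun g := (⟨((g : G ⧸ S)).out⁻¹ * g,
      QuotientGroup.eq.mp (QuotientGroup.out_eq' (g : G ⧸ S))⟩, (g : G ⧸ S))
  left_inv := by
    rintro ⟨⟨s, hs⟩, q⟩
    have h1 : ((q.out * s : G) : G ⧸ S) = q := by
      rw [QuotientGroup.mk_mul_of_mem _ hs, QuotientGroup.out_eq']
    refine Prod.ext (Subtype.ext ?_) h1
    show (((q.out * s : G) : G ⧸ S)).out⁻¹ * (q.out * s) = s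
    rw [h1]
    group
  right_inv := by
    intro g
    show ((g : G ⧸ S)).out * (((g : G ⧸ S)).out⁻¹ * g) = g
    group

theorem genGroupDet_aux {G : Type*} [Group G] (S : Subgroup G)
    [Fintype G] [DecidableEq G] [Fintype S] [DecidableEq S] [Fintype (G ⧸ S)] [DecidableEq (G ⧸ S)]
    [DecidablePred fun g : G => g ∈ (S : Set G)] :
    (Matrix.of fun g h : G =>
      if hm : g * h⁻¹ ∈ (S : Set G) then
        (MvPolynomial.X (⟨g * h⁻¹, hm⟩ : (S : Set G)) : MvPolynomial (S : Set G) ℂ) else 0).det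
    = (Matrix.of fun s t : S =>
        (MvPolynomial.X (s * t⁻¹) : MvPolynomial S ℂ)).det ^ Fintype.card (G ⧸ S) := by
  rw [← Matrix.det_submatrix_equiv_self ((cosetEquiv S).trans (Equiv.inv G))]
  have hM : (Matrix.of fun g h : G =>
      if hm : g * h⁻¹ ∈ (S : Set G) then
        (MvPolynomial.X (⟨g * h⁻¹, hm⟩ : (S : Set G)) : MvPolynomial (S : Set G) ℂ) else 0).submatrix ((cosetEquiv S).trans (Equiv.inv G)) ((cosetEquiv S).trans (Equiv.inv G))
      = Matrix.blockDiagonal (fun _ : G ⧸ S =>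
          Matrix.of fun s t : S => (MvPolynomial.X (s⁻¹ * t) : MvPolynomial S ℂ)) := by
    apply Matrix.ext
    rintro ⟨s, q⟩ ⟨t, q'⟩
    simp only [Matrix.submatrix_apply, Equiv.trans_apply, Equiv.inv_apply, Matrix.of_apply,
      Matrix.blockDiagonal_apply, cosetEquiv, Equiv.coe_fn_mk]
    have key : (q.out * (s : G))⁻¹ * ((q'.out * (t : G))⁻¹)⁻¹ ∈ (S : Set G) ↔ q = q' := by
      rw [SetLike.mem_coe, inv_inv]
      constructor
      · intro h
        have hmem : q.out⁻¹ * q'.out ∈ S := by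
          have h2 := S.mul_mem (S.mul_mem s.2 h) (S.inv_mem t.2)
          convert h2 using 1
          group
        rw [← QuotientGroup.out_eq' q, ← QuotientGroup.out_eq' q']
        exact QuotientGroup.eq.mpr hmem
      · rintro rfl
        have h3 : (q.out * (s : G))⁻¹ * (q.out * (t : G)) = (s : G)⁻¹ * t := by group
        rw [h3]
        exact S.mul_mem (S.inv_mem s.2) t.2
    by_cases hq : q = q'
    · subst hq
      rw [if_pos rfl, dif_pos (key.mpr rfl)]
      congr 1
      apply Subtype.ext
      show (q.out * (s : G))⁻¹ * ((q.out * (t : G))⁻¹)⁻¹ = ((s⁻¹ * t : S) : G)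
      push_cast
      group
    · rw [if_neg hq, dif_neg (fun h => hq (key.mp h))]
  rw [hM, Matrix.det_blockDiagonal, Finset.prod_const, Finset.card_univ]
  congr 1
  rw [← Matrix.det_submatrix_equiv_self (Equiv.inv S)]
  congr 1
  ext s t
  simp only [Matrix.submatrix_apply, Equiv.inv_apply, Matrix.of_apply, inv_inv]

/-- If `S` is a subgroup of the finite group `G`, then the generalized group determinant of `G`
to `S` equals the `(|G|/|S|)`-th power of the group determinant of `S` in the same variables:
`Θ_G(S) = Θ(S)^{|G|/|S|}`. -/
theorem genGroupDet_of_subgroup {G : Type*} [Group G] [Fintype G] (S : Subgroup G) :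
    genGroupDet ℂ G (S : Set G) =
      (groupDet ℂ S) ^ (Fintype.card G / Nat.card S) := by
  classical
  unfold genGroupDet groupDet
  have e1 : Fintype.card G / Nat.card S = Fintype.card (G ⧸ S) := by
    rw [← Nat.card_eq_fintype_card, ← Nat.card_eq_fintype_card,
      Subgroup.card_eq_card_quotient_mul_card_subgroup S]
    exact Nat.mul_div_cancel _ Nat.card_pos
  rw [e1]
  exact @genGroupDet_aux G _ S (Fintype.ofFinite G) (fun a b => Classical.propDecidable (a = b))
    (Fintype.ofFinite S) (fun a b => Classical.propDecidable (a = b)) _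
    (fun a b => Classical.propDecidable (a = b)) (fun g => Classical.propDecidable _)
end

section
/- Let G be a finite group of order n with identity e. If a monomial x_{a_1} x_{a_2} ⋯ x_{a_n} (with a_1, …, a_n ∈ G, repetitions allowed) occurs in the group determinant Θ(G), i.e., has nonzero coefficient, then the elements a_1, …, a_n can be reordered so that their product (with multiplicity) equals e. -/
/-!
Expanding the determinant, every monomial of `Θ(G)` is `∏_g x_{τ(g) g⁻¹}` for a permutation `τ`
of `G`. View the pairs `(τ g, g)` as the edges of a directed multigraph on `G`: every vertex has
in-degree and out-degree one. In any multigraph where in-degree equals out-degree at every vertex,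
two consecutive edges `g → h → k` can be contracted to `g → k` without breaking this balance, and
`(g h⁻¹)(h k⁻¹) = g k⁻¹`; by induction on the number of edges, the edge labels `g h⁻¹` can always
be ordered with product `1`.
-/

open Finset MvPolynomial

theorem List.exists_perm_cons_prod_eq_one_of_mem {G : Type*} [Group G] {l : List G} {x : G}
    (hl : l.prod = 1) (hx : x ∈ l) : ∃ l', l.Perm (x :: l') ∧ (x :: l').prod = 1 := by
  obtain ⟨l₁, l₂, rfl⟩ := List.append_of_mem hx
  refine ⟨l₂ ++ l₁, List.perm_middle.trans (List.perm_append_comm.cons x), ?_⟩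
  simpa [List.rotate_append_length_eq] using List.prod_rotate_eq_one_of_prod_eq_one hl l₁.length

theorem Multiset.exists_list_prod_eq_one_of_map_fst_eq_map_snd {G : Type*} [Group G]
    (s : Multiset (G × G)) (hs : s.map Prod.fst = s.map Prod.snd) :
    ∃ l : List G, (l : Multiset G) = s.map (fun p => p.1 * p.2⁻¹) ∧ l.prod = 1 := by
  induction hn : Multiset.card s using Nat.strong_induction_on generalizing s with
  | _ n ih =>
  rcases s.empty_or_exists_mem with rfl | ⟨⟨g, h⟩, hp⟩
  · exact ⟨[], by simp⟩
  obtain ⟨t, rfl⟩ := Multiset.exists_cons_of_mem hp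
  have hcons : g ::ₘ t.map Prod.fst = h ::ₘ t.map Prod.snd := by simpa using hs
  by_cases hgh : g = h
  · subst hgh
    obtain ⟨l, hl, hprod⟩ := ih (Multiset.card t) (by simp [← hn]) t
      (Multiset.cons_inj_right g |>.mp hcons) rfl
    exact ⟨(g * g⁻¹) :: l, by rw [← Multiset.cons_coe, hl, Multiset.map_cons], by simp [hprod]⟩
  -- the edge `g → h` is followed by some edge `h → k`; contract the two into `g → k`
  obtain ⟨k, hq⟩ : ∃ k, (h, k) ∈ t := by
    have : h ∈ g ::ₘ t.map Prod.fst := hcons ▸ Multiset.mem_cons_self h (t.map Prod.snd)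
    simpa [Ne.symm hgh] using this
  obtain ⟨u, rfl⟩ := Multiset.exists_cons_of_mem hq
  have hcontract : ((g, k) ::ₘ u).map Prod.fst = ((g, k) ::ₘ u).map Prod.snd := by
    have : h ::ₘ g ::ₘ u.map Prod.fst = h ::ₘ k ::ₘ u.map Prod.snd := by
      simpa [Multiset.cons_swap g h] using hcons
    simpa using this
  obtain ⟨l, hl, hprod⟩ := ih _ (by simp [← hn]) _ hcontract rfl
  obtain ⟨l', hperm, hprod'⟩ := List.exists_perm_cons_prod_eq_one_of_mem hprod
    (x := g * k⁻¹) (by simp [← Multiset.mem_coe, hl])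
  have hl' : (l' : Multiset G) = u.map (fun p => p.1 * p.2⁻¹) := by
    have := (Multiset.coe_eq_coe.mpr hperm).symm.trans hl
    rw [← Multiset.cons_coe, Multiset.map_cons] at this
    exact Multiset.cons_inj_right _ |>.mp this
  refine ⟨(g * h⁻¹) :: (h * k⁻¹) :: l', ?_, by simpa [mul_assoc] using hprod'⟩
  simp only [← Multiset.cons_coe, hl', Multiset.map_cons]

theorem Finsupp.toMultiset_sum_single_one {ι α : Type*} (s : Finset ι) (f : ι → α) :
    Finsupp.toMultiset (∑ i ∈ s, Finsupp.single (f i) 1) = s.val.map f := by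
  rw [map_sum, Finset.sum_eq_multiset_sum]
  simp only [Finsupp.toMultiset_single, one_nsmul]
  rw [← Multiset.sum_map_singleton (s.val.map f), Multiset.map_map]
  rfl

theorem Equiv.Perm.exists_comp_eq_of_map_univ_val_eq {ι α : Type*} [Fintype ι]
    {a b : ι → α} (h : univ.val.map a = univ.val.map b) : ∃ σ : Equiv.Perm ι, a ∘ σ = b := by
  classical
  have hfiber (c : α) : Fintype.card {i // b i = c} = Fintype.card {i // a i = c} := by
    have hcount := congrArg (Multiset.count c) h
    simp only [Multiset.count_map] at hcount
    simpa [Fintype.card_subtype, Finset.card_def, eq_comm] using hcount.symm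
  exact ⟨Equiv.ofFiberEquiv fun c => Fintype.equivOfCardEq (hfiber c),
    funext (Equiv.ofFiberEquiv_map _)⟩

theorem List.Perm.exists_perm_ofFn_comp_eq {α : Type*} {n : ℕ} {a : Fin n → α}
    {l : List α} (h : (List.ofFn a).Perm l) : ∃ σ : Equiv.Perm (Fin n), List.ofFn (a ∘ σ) = l := by
  obtain rfl : l.length = n := by simpa using h.length_eq.symm
  have hmap : univ.val.map a = univ.val.map l.get := by
    rw [Fin.univ_val_map, Fin.univ_val_map, List.ofFn_get]
    exact Multiset.coe_eq_coe.mpr h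
  obtain ⟨σ, hσ⟩ := Equiv.Perm.exists_comp_eq_of_map_univ_val_eq hmap
  exact ⟨σ, by rw [hσ, List.ofFn_get]⟩

theorem groupDet_eq_det (R G : Type*) [CommRing R] [Group G] [Fintype G] [DecidableEq G] :
    groupDet R G = (Matrix.of fun g h : G => (X (g * h⁻¹) : MvPolynomial G R)).det := by
  unfold groupDet
  congr!

theorem exists_perm_of_coeff_groupDet_ne_zero {R G : Type*} [CommRing R] [Group G] [Fintype G]
    {d : G →₀ ℕ} (h : coeff d (groupDet R G) ≠ 0) :
    ∃ τ : Equiv.Perm G, ∑ g, Finsupp.single (τ g * g⁻¹) 1 = d := by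
  classical
  rw [groupDet_eq_det, Matrix.det_apply, coeff_sum] at h
  obtain ⟨τ, -, hτ⟩ := Finset.exists_ne_zero_of_sum_ne_zero h
  refine ⟨τ, by_contra fun hne => hτ ?_⟩
  have hmonomial : ∏ g, Matrix.of (fun g h : G => (X (g * h⁻¹) : MvPolynomial G R)) (τ g) g
      = monomial (∑ g, Finsupp.single (τ g * g⁻¹) 1) 1 := by
    rw [monomial_sum_one]
    rfl
  rw [coeff_smul, hmonomial, coeff_monomial, if_neg hne, smul_zero]

/-- If a monomial `x_{a 1} ⋯ x_{a n}` (with `n = |G|`) occurs in the group determinant `Θ(G)`,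
then the `a i` can be reordered so that their product is the identity. -/
theorem prod_eq_one_of_coeff_groupDet_ne_zero {G : Type*} [Group G] [Fintype G]
    (a : Fin (Fintype.card G) → G)
    (h : MvPolynomial.coeff (∑ i, Finsupp.single (a i) 1) (groupDet ℂ G) ≠ 0) :
    ∃ σ : Equiv.Perm (Fin (Fintype.card G)),
      (List.ofFn fun i => a (σ i)).prod = 1 := by
  obtain ⟨τ, hτ⟩ := exists_perm_of_coeff_groupDet_ne_zero h
  have hquot : univ.val.map (fun g => τ g * g⁻¹) = ↑(List.ofFn a) := by
    simpa only [Finsupp.toMultiset_sum_single_one, Fin.univ_val_map]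
      using congrArg Finsupp.toMultiset hτ
  obtain ⟨l, hl, hprod⟩ := Multiset.exists_list_prod_eq_one_of_map_fst_eq_map_snd
    (univ.val.map fun g => (τ g, g)) (by simp [Multiset.map_map, Multiset.map_univ_val_equiv])
  have hperm : (List.ofFn a).Perm l := by
    rw [← Multiset.coe_eq_coe, hl, ← hquot, Multiset.map_map]
    rfl
  obtain ⟨σ, hσ⟩ := hperm.exists_perm_ofFn_comp_eq
  exact ⟨σ, by rw [← hprod, ← hσ]; rfl⟩
end

section
/- Let G be a finite group of order n with identity e, and let a, b, c ∈ G, none equal to e, with a b c = e. If exactly two of a, b, c are equal (i.e., two of them coincide but not all three), then the coefficient of the monomial x_e^{n-3} x_a x_b x_c in the group determinant Θ(G) equals n. -/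
open MvPolynomial Finsupp Equiv Finset

section PermDegree

variable {G : Type*} [Group G] [Fintype G] [DecidableEq G]

/-- The exponent of the monomial `∏ᵢ x_{σ i * i⁻¹}` contributed by `σ` to `groupDet`. -/
noncomputable def permDegree (σ : Perm G) : G →₀ ℕ :=
  ∑ i, single (σ i * i⁻¹) 1

theorem permDegree_apply (σ : Perm G) (x : G) : permDegree σ x = #{i | σ i = x * i} := by
  simp only [permDegree, finsetSum_apply, single_apply, card_filter, ← eq_mul_inv_iff_mul_eq,
    eq_comm]

theorem permDegree_apply_mul_inv_ne_zero (σ : Perm G) (i : G) :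
    permDegree σ (σ i * i⁻¹) ≠ 0 := by
  rw [permDegree_apply, ← pos_iff_ne_zero, card_pos]
  exact ⟨i, by simp⟩

theorem permDegree_eq_of_forall_notMem_eq_self (σ : Perm G) (s : Finset G)
    (hs : ∀ i ∉ s, σ i = i) :
    permDegree σ = single 1 (Fintype.card G - #s) + ∑ i ∈ s, single (σ i * i⁻¹) 1 := by
  have hfix : ∀ i ∈ univ \ s, single (σ i * i⁻¹) 1 = single (1 : G) 1 := fun i hi => by
    rw [hs i (mem_sdiff.1 hi).2, mul_inv_cancel]
  rw [permDegree, ← sum_sdiff (subset_univ s), sum_congr rfl hfix, sum_const,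
    card_univ_sdiff, smul_single, smul_eq_mul, mul_one]

variable (R : Type*) [CommRing R]

theorem groupDet_eq_sum_monomial :
    groupDet R G = ∑ σ : Perm G, monomial (permDegree σ) ((Perm.sign σ : ℤ) : R) := by
  have hdet : groupDet R G = (Matrix.of fun g h : G => (X (g * h⁻¹) : MvPolynomial G R)).det := by
    rw [groupDet]; congr!
  rw [hdet, Matrix.det_apply']
  refine sum_congr rfl fun σ _ => ?_
  rw [permDegree, monomial_sum_index, map_intCast]
  rfl

theorem coeff_groupDet (D : G →₀ ℕ) :
    coeff D (groupDet R G) = ∑ σ with permDegree σ = D, ((Perm.sign σ : ℤ) : R) := by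
  rw [groupDet_eq_sum_monomial, coeff_sum, sum_filter]
  simp only [coeff_monomial]

end PermDegree

section ThreeCycle

variable {G : Type*} [Group G] {t u : G}

theorem mul_ne_one_of_mul_mul_eq_one (ht : t ≠ 1) (h : t * t * u = 1) : t * u ≠ 1 :=
  fun htu => ht (by rwa [mul_assoc, htu, mul_one] at h)

theorem self_ne_mul_mul_self (htu : t * u ≠ 1) (g : G) : g ≠ t * (u * g) := by
  rw [← mul_assoc]; exact (mul_ne_right.2 htu).symm

variable [DecidableEq G]

def threeCycle (t u g : G) : Perm G :=
  swap g (u * g) * swap (u * g) (t * (u * g))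

theorem threeCycle_apply_self (hu : u ≠ 1) (htu : t * u ≠ 1) (g : G) :
    threeCycle t u g g = u * g := by
  rw [threeCycle, Perm.mul_apply,
    swap_apply_of_ne_of_ne (mul_ne_right.2 hu).symm (self_ne_mul_mul_self htu g),
    swap_apply_left]

theorem threeCycle_apply_mul_self (ht : t ≠ 1) (htu : t * u ≠ 1) (g : G) :
    threeCycle t u g (u * g) = t * (u * g) := by
  rw [threeCycle, Perm.mul_apply, swap_apply_left,
    swap_apply_of_ne_of_ne (self_ne_mul_mul_self htu g).symm (mul_ne_right.2 ht)]

theorem threeCycle_apply_mul_mul_self (g : G) : threeCycle t u g (t * (u * g)) = g := by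
  rw [threeCycle, Perm.mul_apply, swap_apply_right, swap_apply_right]

theorem threeCycle_apply_of_ne {g x : G} (h₁ : x ≠ g) (h₂ : x ≠ u * g) (h₃ : x ≠ t * (u * g)) :
    threeCycle t u g x = x := by
  rw [threeCycle, Perm.mul_apply, swap_apply_of_ne_of_ne h₂ h₃, swap_apply_of_ne_of_ne h₁ h₂]

theorem sign_threeCycle [Fintype G] (ht : t ≠ 1) (hu : u ≠ 1) (g : G) :
    Perm.sign (threeCycle t u g) = 1 := by
  rw [threeCycle, map_mul, Perm.sign_swap (mul_ne_right.2 hu).symm,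
    Perm.sign_swap (mul_ne_right.2 ht).symm, Int.units_mul_self]

end ThreeCycle

section ThreeCycleDegree

variable {G : Type*} [Group G] [Fintype G] {t u : G}

noncomputable def threeCycleDegree (t u : G) : G →₀ ℕ :=
  single 1 (Fintype.card G - 3) + single t 1 + single t 1 + single u 1

theorem threeCycleDegree_apply_left (ht : t ≠ 1) (hne : t ≠ u) :
    threeCycleDegree t u t = 2 := by
  simp [threeCycleDegree, ht, hne]

theorem threeCycleDegree_apply_right (hu : u ≠ 1) (hne : t ≠ u) :
    threeCycleDegree t u u = 1 := by
  simp [threeCycleDegree, hu, hne]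

theorem threeCycleDegree_apply_eq_zero {x : G} (h₁ : x ≠ 1) (ht : x ≠ t) (hu : x ≠ u) :
    threeCycleDegree t u x = 0 := by
  simp [threeCycleDegree, h₁, ht, hu]

variable [DecidableEq G]

theorem permDegree_threeCycle (ht : t ≠ 1) (hu : u ≠ 1) (h : t * t * u = 1) (g : G) :
    permDegree (threeCycle t u g) = threeCycleDegree t u := by
  have htu := mul_ne_one_of_mul_mul_eq_one ht h
  have hg₁ : g ≠ u * g := (mul_ne_right.2 hu).symm
  have hg₂ : u * g ≠ t * (u * g) := (mul_ne_right.2 ht).symm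
  have hg₃ := self_ne_mul_mul_self htu g
  rw [permDegree_eq_of_forall_notMem_eq_self _ {g, u * g, t * (u * g)}]
  · rw [sum_insert (by simp [hg₁, hg₃]), sum_insert (by simp [hg₂]), sum_singleton,
      card_insert_of_notMem (by simp [hg₁, hg₃]), card_pair hg₂, threeCycle_apply_self hu htu,
      threeCycle_apply_mul_self ht htu, threeCycle_apply_mul_mul_self]
    have hinv : g * (t * (u * g))⁻¹ = t := by
      rw [← mul_assoc, mul_inv_rev, mul_inv_cancel_left]
      exact inv_eq_of_mul_eq_one_left (by rwa [← mul_assoc])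
    simp only [mul_inv_cancel_right, hinv, Nat.reduceAdd, threeCycleDegree]
    abel
  · intro x hx
    simp only [mem_insert, mem_singleton, not_or] at hx
    exact threeCycle_apply_of_ne hx.1 hx.2.1 hx.2.2

theorem threeCycle_injective (ht : t ≠ 1) (hu : u ≠ 1) (hne : t ≠ u) (h : t * t * u = 1) :
    Function.Injective (threeCycle t u) := by
  intro g g' hgg'
  have htu := mul_ne_one_of_mul_mul_eq_one ht h
  have hcard : #{i | threeCycle t u g i = u * i} = 1 := by
    rw [← permDegree_apply, permDegree_threeCycle ht hu h, threeCycleDegree_apply_right hu hne]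
  refine card_le_one.1 hcard.le _ (by simp [threeCycle_apply_self hu htu]) _ ?_
  simp [hgg', threeCycle_apply_self hu htu]

theorem apply_eq_or_of_permDegree_eq_threeCycleDegree {σ : Perm G}
    (hσ : permDegree σ = threeCycleDegree t u) (i : G) :
    σ i = i ∨ σ i = t * i ∨ σ i = u * i := by
  by_contra! hi
  refine permDegree_apply_mul_inv_ne_zero σ i ?_
  rw [hσ]
  refine threeCycleDegree_apply_eq_zero ?_ ?_ ?_ <;> rw [ne_eq, mul_inv_eq_iff_eq_mul]
  exacts [by simpa using hi.1, hi.2.1, hi.2.2]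

theorem eq_threeCycle_of_permDegree_eq (ht : t ≠ 1) (hu : u ≠ 1) (hne : t ≠ u)
    (h : t * t * u = 1) {σ : Perm G} (hσ : permDegree σ = threeCycleDegree t u) :
    ∃ g, σ = threeCycle t u g := by
  have htu := mul_ne_one_of_mul_mul_eq_one ht h
  have hdisp := apply_eq_or_of_permDegree_eq_threeCycleDegree hσ
  obtain ⟨g, hg⟩ : ∃ g, ({i | σ i = u * i} : Finset G) = {g} := by
    rw [← card_eq_one, ← permDegree_apply, hσ, threeCycleDegree_apply_right hu hne]
  have hσu : ∀ i, σ i = u * i ↔ i = g := by simpa [Finset.ext_iff] using hg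
  have h₁ : σ g = u * g := (hσu g).2 rfl
  have h₂ : σ (u * g) = t * (u * g) := by
    rcases hdisp (u * g) with h' | h' | h'
    · exact absurd (σ.injective (h'.trans h₁.symm)) (mul_ne_right.2 hu)
    · exact h'
    · exact absurd ((hσu _).1 h') (mul_ne_right.2 hu)
  have hcycle : t * (t * (u * g)) = g := by rw [← mul_assoc, ← mul_assoc, h, one_mul]
  have h₃ : σ (t * (u * g)) = g := by
    rcases hdisp (t * (u * g)) with h' | h' | h'
    · exact absurd (σ.injective (h'.trans h₂.symm)) (mul_ne_right.2 ht)
    · rw [h', hcycle]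
    · exact absurd ((hσu _).1 h') (self_ne_mul_mul_self htu g).symm
  have hσt : ({i | σ i = t * i} : Finset G) = {u * g, t * (u * g)} := by
    refine (eq_of_subset_of_card_le ?_ ?_).symm
    · simp [insert_subset_iff, h₂, h₃, hcycle]
    · rw [← permDegree_apply, hσ, threeCycleDegree_apply_left ht hne,
        card_pair (mul_ne_right.2 ht).symm]
  refine ⟨g, Equiv.ext fun x => ?_⟩
  by_cases hx : x = g ∨ x = u * g ∨ x = t * (u * g)
  · rcases hx with rfl | rfl | rfl
    · rw [h₁, threeCycle_apply_self hu htu]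
    · rw [h₂, threeCycle_apply_mul_self ht htu]
    · rw [h₃, threeCycle_apply_mul_mul_self]
  · push Not at hx
    rw [threeCycle_apply_of_ne hx.1 hx.2.1 hx.2.2]
    rcases hdisp x with h' | h' | h'
    · exact h'
    · have hxt : x ∈ ({i | σ i = t * i} : Finset G) := by simp [h']
      rw [hσt, mem_insert, mem_singleton] at hxt
      exact (hxt.elim hx.2.1 hx.2.2).elim
    · exact absurd ((hσu x).1 h') hx.1

theorem coeff_threeCycleDegree_groupDet (R : Type*) [CommRing R] (ht : t ≠ 1) (hu : u ≠ 1)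
    (hne : t ≠ u) (h : t * t * u = 1) :
    coeff (threeCycleDegree t u) (groupDet R G) = Fintype.card G := by
  have hfilter : ({σ | permDegree σ = threeCycleDegree t u} : Finset (Perm G)) =
      univ.image (threeCycle t u) := by
    ext σ
    simp only [mem_filter, mem_univ, true_and, mem_image]
    refine ⟨fun hσ => ?_, fun ⟨g, hg⟩ => hg ▸ permDegree_threeCycle ht hu h g⟩
    obtain ⟨g, rfl⟩ := eq_threeCycle_of_permDegree_eq ht hu hne h hσ
    exact ⟨g, rfl⟩
  rw [coeff_groupDet, hfilter, sum_image (threeCycle_injective ht hu hne h).injOn]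
  simp [sign_threeCycle ht hu]

end ThreeCycleDegree

/-- If `a, b, c ≠ e`, `a * b * c = e`, and exactly two of `a, b, c` are equal, then the
coefficient of the monomial `x_e^{n-3} x_a x_b x_c` in `Θ(G)` equals `n = |G|`. -/
theorem coeff_groupDet_two_equal {G : Type*} [Group G] [Fintype G]
    (a b c : G) (ha : a ≠ 1) (hb : b ≠ 1) (hc : c ≠ 1) (habc : a * b * c = 1)
    (htwo : (a = b ∧ a ≠ c) ∨ (a = c ∧ a ≠ b) ∨ (b = c ∧ a ≠ b)) :
    MvPolynomial.coeff
      (Finsupp.single (1 : G) (Fintype.card G - 3) +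
        Finsupp.single a 1 + Finsupp.single b 1 + Finsupp.single c 1)
      (groupDet ℂ G) = (Fintype.card G : ℂ) := by
  classical
  rcases htwo with ⟨rfl, hac⟩ | ⟨rfl, hab⟩ | ⟨rfl, hab⟩
  · exact coeff_threeCycleDegree_groupDet ℂ ha hc hac habc
  · rw [add_right_comm _ (single b 1)]
    exact coeff_threeCycleDegree_groupDet ℂ ha hb hab
      (by rw [mul_assoc]; exact mul_eq_one_comm.1 habc)
  · rw [add_right_comm _ (single a 1), add_right_comm _ (single a 1)]
    exact coeff_threeCycleDegree_groupDet ℂ hb ha (Ne.symm hab)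
      (mul_eq_one_comm.1 (by rwa [mul_assoc] at habc))
end

section
/- Let G be a finite group of order n with identity e and let S be a subset of G. If a monomial x_{a_1} x_{a_2} ⋯ x_{a_n} (with a_1, …, a_n ∈ S, repetitions allowed) occurs in the generalized group determinant Θ_G(S), i.e., has nonzero coefficient, then the elements a_1, …, a_n can be reordered so that their product (with multiplicity) equals e. -/
/-!
Expanding the determinant, every monomial of `Θ_G(S)` is `∏_g x_{τ(g) g⁻¹}` for a permutation
`τ` of `G`, so the `a i` are the elements `τ(g) g⁻¹` listed in some order. These can always be
ordered with product `1`: along a cycle `g ↦ τ g ↦ τ² g ↦ ⋯` the products telescope. We argue by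
induction on the support of `τ`: cutting `g` out of its cycle (`swap g (τ g) * τ`) replaces the
two factors `τ(g) g⁻¹` and `g p⁻¹`, where `τ p = g`, by their product and a factor `1`.
-/

open Finset Equiv MvPolynomial

namespace Multiset

theorem exists_eq_append_cons_of_coe_eq_cons {α : Type*} {l : List α} {z : α} {m : Multiset α}
    (h : (l : Multiset α) = z ::ₘ m) :
    ∃ u w : List α, l = u ++ z :: w ∧ ((u ++ w : List α) : Multiset α) = m := by
  obtain ⟨u, w, rfl⟩ := List.append_of_mem (mem_coe.1 (h ▸ mem_cons_self z m))
  refine ⟨u, w, rfl, (cons_inj_right z).1 ?_⟩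
  rw [← h, cons_coe, coe_eq_coe]
  exact List.perm_middle.symm

theorem map_univ_eq_cons_cons {ι α : Type*} [Fintype ι] [DecidableEq ι] (f : ι → α) {i j : ι}
    (hij : i ≠ j) :
    univ.val.map f = f i ::ₘ f j ::ₘ ((univ.erase i).erase j).val.map f := by
  rw [← map_cons, ← map_cons, erase_val, erase_val,
    cons_erase ((mem_erase_of_ne hij.symm).2 (mem_univ_val j)), cons_erase (mem_univ_val i)]

variable {G : Type*} [Monoid G]

def HasProdOneOrdering (m : Multiset G) : Prop :=
  ∃ l : List G, (l : Multiset G) = m ∧ l.prod = 1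

theorem hasProdOneOrdering_of_forall_eq_one {m : Multiset G} (h : ∀ x ∈ m, x = 1) :
    m.HasProdOneOrdering :=
  ⟨m.toList, coe_toList m, List.prod_eq_one fun x hx => h x (mem_toList.1 hx)⟩

theorem HasProdOneOrdering.of_cons_one {m : Multiset G} (h : (1 ::ₘ m).HasProdOneOrdering) :
    m.HasProdOneOrdering := by
  obtain ⟨l, hl, hprod⟩ := h
  obtain ⟨u, w, rfl, huw⟩ := exists_eq_append_cons_of_coe_eq_cons hl
  refine ⟨u ++ w, huw, ?_⟩
  simpa using hprod

theorem HasProdOneOrdering.cons_cons_of_cons_mul {x y : G} {m : Multiset G}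
    (h : (x * y ::ₘ m).HasProdOneOrdering) : (x ::ₘ y ::ₘ m).HasProdOneOrdering := by
  obtain ⟨l, hl, hprod⟩ := h
  obtain ⟨u, w, rfl, huw⟩ := exists_eq_append_cons_of_coe_eq_cons hl
  refine ⟨u ++ x :: y :: w, ?_, ?_⟩
  · rw [← huw, cons_coe, cons_coe, coe_eq_coe]
    exact List.perm_middle.trans (List.perm_middle.cons x)
  · simpa [mul_assoc] using hprod

theorem hasProdOneOrdering_map_univ_of_split {ι : Type*} [Fintype ι] [DecidableEq ι]
    {f f' : ι → G} {i j : ι} (hij : i ≠ j)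
    (hi : f' i = 1) (hj : f' j = f i * f j) (hf : ∀ k, k ≠ i → k ≠ j → f' k = f k)
    (h : (univ.val.map f').HasProdOneOrdering) : (univ.val.map f).HasProdOneOrdering := by
  have hrest : ((univ.erase i).erase j).val.map f' = ((univ.erase i).erase j).val.map f :=
    map_congr rfl fun k hk => by
      rw [Finset.mem_val, mem_erase, mem_erase] at hk
      exact hf k hk.2.1 hk.1
  rw [map_univ_eq_cons_cons f' hij, hi, hj, hrest] at h
  rw [map_univ_eq_cons_cons f hij]
  exact h.of_cons_one.cons_cons_of_cons_mul

theorem toFinsupp_map_univ {ι α : Type*} [Fintype ι] [DecidableEq α] (f : ι → α) :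
    (univ.val.map f).toFinsupp = ∑ i, Finsupp.single (f i) 1 := by
  rw [← sum_map_singleton (univ.val.map f), map_map, ← Finset.sum_eq_multiset_sum, map_sum]
  simp

end Multiset

namespace Equiv.Perm

variable {G : Type*} [Group G] [Fintype G] [DecidableEq G]

theorem hasProdOneOrdering_map_univ_mul_inv (τ : Perm G) :
    (univ.val.map fun x => τ x * x⁻¹).HasProdOneOrdering := by
  by_cases hτ : ∃ g, τ g ≠ g
  · obtain ⟨g, hg⟩ := hτ
    have hne : g ≠ τ.symm g := fun h => hg (τ.symm_apply_eq.1 h.symm).symm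
    refine Multiset.hasProdOneOrdering_map_univ_of_split hne (by simp) (by simp [mul_assoc])
      (fun k hkg hkp => ?_) (hasProdOneOrdering_map_univ_mul_inv (swap g (τ g) * τ))
    rw [Perm.mul_apply, swap_apply_of_ne_of_ne]
    · exact fun h => hkp (by rw [← h, symm_apply_apply])
    · exact fun h => hkg (τ.injective h)
  · push Not at hτ
    exact Multiset.hasProdOneOrdering_of_forall_eq_one (by simp [hτ, Multiset.mem_replicate])
termination_by τ.support.card
decreasing_by exact card_support_swap_mul hg

end Equiv.Perm

theorem Equiv.Perm.exists_comp_eq_of_map_univ_eq {ι α : Type*} [Fintype ι] {u v : ι → α}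
    (h : univ.val.map u = univ.val.map v) : ∃ σ : Perm ι, v ∘ σ = u := by
  classical
  have hcard (c : α) : Fintype.card {i // u i = c} = Fintype.card {i // v i = c} := by
    simpa [Fintype.card_subtype, Finset.card_def, Multiset.count_map, eq_comm] using
      congrArg (Multiset.count c) h
  exact ⟨ofFiberEquiv fun c => Fintype.equivOfCardEq (hcard c), funext (ofFiberEquiv_map _)⟩

theorem List.Perm.exists_ofFn_comp_perm_eq {α : Type*} {n : ℕ} {l : List α} {v : Fin n → α}
    (h : l.Perm (List.ofFn v)) : ∃ σ : Equiv.Perm (Fin n), List.ofFn (v ∘ σ) = l := by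
  have hlen : l.length = n := by simpa using h.length_eq
  set u : Fin n → α := fun i => l.get (Fin.cast hlen.symm i)
  have hl : List.ofFn u = l := by
    subst hlen
    exact List.ofFn_get l
  obtain ⟨σ, hσ⟩ := Equiv.Perm.exists_comp_eq_of_map_univ_eq (u := u) (v := v)
    (by rw [Fin.univ_val_map, Fin.univ_val_map, hl, Multiset.coe_eq_coe]; exact h)
  exact ⟨σ, by rw [hσ, hl]⟩

theorem Multiset.HasProdOneOrdering.exists_perm_prod_ofFn_eq_one {G : Type*} [Monoid G] {n : ℕ}
    {v : Fin n → G} (h : (univ.val.map v).HasProdOneOrdering) :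
    ∃ σ : Perm (Fin n), (List.ofFn (v ∘ σ)).prod = 1 := by
  obtain ⟨l, hl, hprod⟩ := h
  rw [Fin.univ_val_map, coe_eq_coe] at hl
  obtain ⟨σ, hσ⟩ := hl.exists_ofFn_comp_perm_eq
  exact ⟨σ, hσ ▸ hprod⟩

theorem genGroupDet_eq_det (R : Type*) [CommRing R] {G : Type*} [Group G] [Fintype G]
    [DecidableEq G] (S : Set G) [DecidablePred (· ∈ S)] :
    genGroupDet R G S = (Matrix.of fun g h : G =>
      if hm : g * h⁻¹ ∈ S then (X ⟨g * h⁻¹, hm⟩ : MvPolynomial S R) else 0).det := by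
  unfold genGroupDet
  congr!

theorem exists_perm_of_coeff_genGroupDet_ne_zero {R G : Type*} [CommRing R] [Group G]
    [Fintype G] {S : Set G} {d : S →₀ ℕ} (h : coeff d (genGroupDet R G S) ≠ 0) :
    ∃ σ : Perm G, ∃ b : G → S,
      (∀ g, (b g : G) = σ g * g⁻¹) ∧ d = ∑ g, Finsupp.single (b g) 1 := by
  classical
  rw [genGroupDet_eq_det, Matrix.det_apply, coeff_sum] at h
  obtain ⟨σ, -, hσ⟩ := exists_ne_zero_of_sum_ne_zero h
  have hmem (g : G) : σ g * g⁻¹ ∈ S := by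
    by_contra hg
    exact hσ (by rw [prod_eq_zero (mem_univ g) (by simp [hg])]; simp)
  refine ⟨σ, fun g => ⟨σ g * g⁻¹, hmem g⟩, fun _ => rfl, ?_⟩
  simp only [Matrix.of_apply, dif_pos (hmem _), X, ← monomial_sum_one, coeff_smul,
    coeff_monomial] at hσ
  by_contra hd
  exact hσ (by rw [if_neg (Ne.symm hd), smul_zero])

/-- If a monomial `x_{a 1} ⋯ x_{a n}` (with `n = |G|`, all `a i ∈ S`) occurs in the generalized
group determinant `Θ_G(S)`, then the `a i` can be reordered so that their product is `e`. -/
theorem prod_eq_one_of_coeff_genGroupDet_ne_zero {G : Type*} [Group G] [Fintype G]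
    (S : Set G) (a : Fin (Fintype.card G) → S)
    (h : MvPolynomial.coeff (∑ i, Finsupp.single (a i) 1) (genGroupDet ℂ G S) ≠ 0) :
    ∃ σ : Equiv.Perm (Fin (Fintype.card G)),
      (List.ofFn fun i => (a (σ i) : G)).prod = 1 := by
  classical
  obtain ⟨τ, b, hb, hab⟩ := exists_perm_of_coeff_genGroupDet_ne_zero h
  have hmap : univ.val.map a = univ.val.map b := by
    apply Multiset.toFinsupp.injective
    rw [Multiset.toFinsupp_map_univ, Multiset.toFinsupp_map_univ, hab]
  have hval : univ.val.map (fun i => (a i : G)) = univ.val.map fun g => τ g * g⁻¹ := by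
    simpa [Multiset.map_map, Function.comp_def, hb] using congrArg (Multiset.map Subtype.val) hmap
  exact (hval ▸ τ.hasProdOneOrdering_map_univ_mul_inv).exists_perm_prod_ofFn_eq_one
end

section
/- Let G be a finite group of order n with identity e and let S be a subset of G. Suppose a, b, c ∈ S, none equal to e, and the monomial x_e^{n-3} x_a x_b x_c occurs (has nonzero coefficient) in the generalized group determinant Θ_G(S). Then the coefficient of this monomial equals: n/3 if a = b = c; n if exactly two of a, b, c are equal; n if a, b, c are pairwise distinct and a b ≠ b a; and 2n if a, b, c are pairwise distinct and a b = b a. -/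
/-!
In the Leibniz expansion of `det (x_{g h⁻¹})` the permutation `σ` contributes
`sign σ * ∏_g x_{σ g * g⁻¹}`. The monomial `x_e^{n-3} x_a x_b x_c` with `a, b, c ≠ e` therefore
comes exactly from the permutations with `n - 3` fixed points, i.e. from 3-cycles, all of sign `1`.
A 3-cycle together with a point `g` of its support is the same as `g` together with the steps
`(x, y, z)` of the cycle `g ↦ x g ↦ y x g ↦ g`, which satisfy `z y x = 1` and form an ordering
of the multiset `{a, b, c}`. Hence `3 · coeff = n · N`, where `N` counts such orderings. They fall
into the rotations of `(a, b, c)`, present iff `c b a = 1`, and those of `(a, c, b)`, present iff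
`b c a = 1`; when one of these relations holds, both hold iff `a b = b a`. So `N` is `1`, `3`,
`3` or `6` in the four cases.
-/

open Finset

section Triples

variable {α : Type*}

noncomputable def tripleWeight (x y z : α) : α →₀ ℕ :=
  Finsupp.single x 1 + Finsupp.single y 1 + Finsupp.single z 1

lemma tripleWeight_comm₁₂ (x y z : α) : tripleWeight x y z = tripleWeight y x z := by
  simp only [tripleWeight, add_comm (Finsupp.single x 1)]

lemma tripleWeight_comm₂₃ (x y z : α) : tripleWeight x y z = tripleWeight x z y := by
  simp only [tripleWeight, add_right_comm _ (Finsupp.single y 1)]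

variable [DecidableEq α]

def rotations (x y z : α) : Finset (α × α × α) := {(x, y, z), (y, z, x), (z, x, y)}

lemma rotations_rotate (x y z : α) : rotations y z x = rotations x y z := by
  ext
  simp only [rotations, mem_insert, mem_singleton]
  tauto

lemma tripleWeight_eq_tripleWeight_iff {x y z a b c : α} :
    tripleWeight x y z = tripleWeight a b c ↔ (x, y, z) ∈ rotations a b c ∪ rotations a c b := by
  have h (u v w : α) : tripleWeight u v w = Multiset.toFinsupp ↑[u, v, w] := by
    simp only [tripleWeight, ← Multiset.toFinsupp_singleton, ← map_add]
    rfl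
  rw [h, h, Multiset.toFinsupp.injective.eq_iff, Multiset.coe_eq_coe, ← List.mem_permutations']
  simp only [List.permutations', List.permutations'Aux, List.flatMap_cons, List.flatMap_nil,
    List.append_nil, List.map_cons, List.map_nil, List.cons_append, List.nil_append, List.mem_cons,
    List.cons.injEq, and_true, List.not_mem_nil, or_false, rotations, union_insert, insert_union,
    singleton_union, mem_insert, Prod.mk.injEq, mem_singleton]
  tauto

end Triples

section Orientations

variable {G : Type*} [Group G]

lemma mul_mul_eq_one_rotate {x y z : G} : x * y * z = 1 ↔ z * x * y = 1 := by
  rw [mul_eq_one_comm, ← mul_assoc]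

lemma both_orientations_iff_commute {a b c : G} (h : c * b * a = 1 ∨ b * c * a = 1) :
    c * b * a = 1 ∧ b * c * a = 1 ↔ a * b = b * a := by
  constructor
  · rintro ⟨h₁, h₂⟩
    rw [mul_assoc, ← eq_inv_iff_mul_eq_one] at h₁
    rw [mul_mul_eq_one_rotate, mul_mul_eq_one_rotate, mul_assoc, ← eq_inv_iff_mul_eq_one] at h₂
    exact inv_injective (h₂.symm.trans h₁)
  · intro hab
    rcases h with h | h
    · refine ⟨h, ?_⟩
      rwa [mul_mul_eq_one_rotate, mul_mul_eq_one_rotate, mul_assoc, hab, ← mul_assoc]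
    · refine ⟨?_, h⟩
      rwa [mul_mul_eq_one_rotate, mul_mul_eq_one_rotate, mul_assoc, hab, ← mul_assoc] at h

variable [DecidableEq G]

lemma filter_rotations (x y z : G) :
    (rotations x y z).filter (fun t => t.2.2 * t.2.1 * t.1 = 1) =
      if z * y * x = 1 then rotations x y z else ∅ := by
  rw [← filter_const]
  refine filter_congr fun t ht => ?_
  simp only [rotations, mem_insert, mem_singleton] at ht
  rcases ht with rfl | rfl | rfl
  · rfl
  · rw [mul_mul_eq_one_rotate, mul_mul_eq_one_rotate]
  · rw [mul_mul_eq_one_rotate]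

end Orientations

section CycleTriples

variable {G : Type*} [Group G] [Fintype G] [DecidableEq G]

/-- Triples `(x, y, z)` with multiset `W` that are the successive steps
`g ↦ x g ↦ y x g ↦ z y x g = g` of a cycle. -/
noncomputable def cycleTriples (W : G →₀ ℕ) : Finset (G × G × G) :=
  {t | t.2.2 * t.2.1 * t.1 = 1 ∧ tripleWeight t.1 t.2.1 t.2.2 = W}

lemma cycleTriples_tripleWeight (a b c : G) :
    cycleTriples (tripleWeight a b c) =
      (if c * b * a = 1 then rotations a b c else ∅) ∪
        (if b * c * a = 1 then rotations a c b else ∅) := by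
  rw [← filter_rotations, ← filter_rotations, ← filter_union]
  ext t
  simp [cycleTriples, tripleWeight_eq_tripleWeight_iff, and_comm]

lemma orientation_of_cycleTriples_nonempty {a b c : G}
    (h : (cycleTriples (tripleWeight a b c)).Nonempty) : c * b * a = 1 ∨ b * c * a = 1 := by
  by_contra! h'
  simp [cycleTriples_tripleWeight, h'.1, h'.2] at h

lemma card_cycleTriples_self {a : G} (h : (cycleTriples (tripleWeight a a a)).Nonempty) :
    #(cycleTriples (tripleWeight a a a)) = 1 := by
  rw [cycleTriples_tripleWeight, union_self] at h ⊢
  split_ifs at h ⊢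
  · simp [rotations]
  · simp at h

lemma card_cycleTriples_of_ne {a c : G} (hac : a ≠ c)
    (h : (cycleTriples (tripleWeight a a c)).Nonempty) :
    #(cycleTriples (tripleWeight a a c)) = 3 := by
  simp only [cycleTriples_tripleWeight, rotations_rotate a a c, mul_mul_eq_one_rotate (x := c),
    union_self] at h ⊢
  split_ifs at h ⊢
  · simp [rotations, hac, hac.symm]
  · simp at h

lemma card_cycleTriples_of_pairwise_ne {a b c : G} (hab : a ≠ b) (hac : a ≠ c) (hbc : b ≠ c) :
    #(cycleTriples (tripleWeight a b c)) =
      (if c * b * a = 1 then 3 else 0) + (if b * c * a = 1 then 3 else 0) := by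
  have hcard (x y z : G) (hxy : x ≠ y) (hxz : x ≠ z) (hyz : y ≠ z) : #(rotations x y z) = 3 := by
    simp [rotations, hxy, hxz, hyz, hxy.symm, hxz.symm, hyz.symm]
  rw [cycleTriples_tripleWeight, card_union_of_disjoint]
  · simp only [apply_ite card, card_empty, hcard a b c hab hac hbc, hcard a c b hac hab hbc.symm]
  · split_ifs <;> simp [rotations, hab, hac, hbc, hab.symm, hac.symm, hbc.symm]

lemma card_cycleTriples_of_not_commute {a b c : G} (hab : a ≠ b) (hac : a ≠ c) (hbc : b ≠ c)
    (hcomm : a * b ≠ b * a) (h : (cycleTriples (tripleWeight a b c)).Nonempty) :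
    #(cycleTriples (tripleWeight a b c)) = 3 := by
  have h₁ := orientation_of_cycleTriples_nonempty h
  have h₂ := mt (both_orientations_iff_commute h₁).mp hcomm
  rw [card_cycleTriples_of_pairwise_ne hab hac hbc]
  split_ifs <;> tauto

lemma card_cycleTriples_of_commute {a b c : G} (hab : a ≠ b) (hac : a ≠ c) (hbc : b ≠ c)
    (hcomm : a * b = b * a) (h : (cycleTriples (tripleWeight a b c)).Nonempty) :
    #(cycleTriples (tripleWeight a b c)) = 6 := by
  obtain ⟨h₁, h₂⟩ :=
    (both_orientations_iff_commute (orientation_of_cycleTriples_nonempty h)).mpr hcomm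
  rw [card_cycleTriples_of_pairwise_ne hab hac hbc, if_pos h₁, if_pos h₂]

end CycleTriples

section PermWeight

variable {G : Type*} [Group G] [Fintype G]

open Equiv Perm

/-- The exponent of the monomial `∏_g x_{σ g * g⁻¹}` contributed by `σ` to the group
determinant. -/
noncomputable def permWeight (σ : Perm G) : G →₀ ℕ := ∑ g, Finsupp.single (σ g * g⁻¹) 1

lemma degree_permWeight (σ : Perm G) : (permWeight σ).degree = Fintype.card G := by
  simp [permWeight, Finsupp.degree_single]

variable [DecidableEq G]

noncomputable def permsOfWeight (W : G →₀ ℕ) : Finset (Perm G) := {σ | permWeight σ = W}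

@[simp]
lemma mem_permsOfWeight {W : G →₀ ℕ} {σ : Perm G} : σ ∈ permsOfWeight W ↔ permWeight σ = W := by
  simp [permsOfWeight]

lemma permWeight_apply (σ : Perm G) (t : G) : permWeight σ t = #{g | σ g * g⁻¹ = t} := by
  rw [card_filter]
  simp [permWeight, Finsupp.single_apply, eq_comm]

lemma isThreeCycle_of_mem_permsOfWeight {σ : Perm G} {a b c : G}
    (ha : a ≠ 1) (hb : b ≠ 1) (hc : c ≠ 1)
    (h : σ ∈ permsOfWeight (Finsupp.single 1 (Fintype.card G - 3) + tripleWeight a b c)) :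
    σ.IsThreeCycle := by
  rw [mem_permsOfWeight] at h
  have hfix : #{g | σ g = g} + #σ.support = Fintype.card G :=
    card_filter_add_card_filter_not _
  have hone : permWeight σ 1 = Fintype.card G - 3 := by
    rw [h]
    simp [tripleWeight, ha.symm, hb.symm, hc.symm]
  have hdeg : (permWeight σ).degree = Fintype.card G - 3 + 3 := by
    rw [h, tripleWeight]
    simp only [map_add, Finsupp.degree_single]
  simp only [permWeight_apply, mul_inv_eq_one] at hone
  rw [degree_permWeight] at hdeg
  exact card_support_eq_three_iff.mp (by omega)

end PermWeight

section ThreeCycles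

variable {α : Type*} [DecidableEq α]

open Equiv Perm

lemma formPerm_triple_apply {p q r : α} (hpq : p ≠ q) (hpr : p ≠ r) (hqr : q ≠ r) :
    List.formPerm [p, q, r] p = q ∧ List.formPerm [p, q, r] q = r ∧
      List.formPerm [p, q, r] r = p := by
  simp [List.formPerm_cons_cons, swap_apply_of_ne_of_ne, hpq, hpr, Ne.symm hpr, Ne.symm hqr]

variable [Fintype α] {σ : Perm α} {g : α}

lemma Equiv.Perm.IsThreeCycle.toList_eq (hσ : σ.IsThreeCycle) (hg : g ∈ σ.support) :
    toList σ g = [g, σ g, σ (σ g)] := by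
  simp [toList, hσ.isCycle.cycleOf_eq (mem_support.mp hg), hσ.card_support, List.iterate]

lemma Equiv.Perm.IsThreeCycle.formPerm_eq (hσ : σ.IsThreeCycle) (hg : g ∈ σ.support) :
    List.formPerm [g, σ g, σ (σ g)] = σ := by
  rw [← hσ.toList_eq hg, formPerm_toList, hσ.isCycle.cycleOf_eq (mem_support.mp hg)]

lemma Equiv.Perm.IsThreeCycle.points_ne (hσ : σ.IsThreeCycle) (hg : g ∈ σ.support) :
    g ≠ σ g ∧ g ≠ σ (σ g) ∧ σ g ≠ σ (σ g) := by
  have h := nodup_toList σ g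
  simp only [hσ.toList_eq hg, List.nodup_cons, List.mem_cons, not_or,
    List.not_mem_nil, List.nodup_nil] at h
  tauto

end ThreeCycles

section Steps

variable {G : Type*} [Group G] {x y z : G}

open Equiv Perm

lemma steps_points_ne (hx : x ≠ 1) (hy : y ≠ 1) (hz : z ≠ 1) (hxyz : z * y * x = 1) (g : G) :
    g ≠ x * g ∧ g ≠ y * (x * g) ∧ x * g ≠ y * (x * g) := by
  have hyx : y * x ≠ 1 := by
    rw [mul_assoc, ← eq_inv_iff_mul_eq_one] at hxyz
    rintro h
    exact hz (by rw [hxyz, h, inv_one])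
  refine ⟨?_, ?_, ?_⟩ <;> intro h
  · exact hx (right_eq_mul.mp h)
  · exact hyx (right_eq_mul.mp (by rwa [← mul_assoc] at h))
  · exact hy (right_eq_mul.mp h)

def cycleSteps (σ : Perm G) (g : G) : G × G × G :=
  (σ g * g⁻¹, σ (σ g) * (σ g)⁻¹, g * (σ (σ g))⁻¹)

variable [DecidableEq G]

/-- The 3-cycle `g ↦ x g ↦ y x g ↦ g`, where `t = (x, y, z)`; on `cycleTriples`, `z = (y x)⁻¹` is
the closing step. -/
noncomputable def stepCycle (g : G) (t : G × G × G) : Perm G :=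
  List.formPerm [g, t.1 * g, t.2.1 * (t.1 * g)]

lemma cycleSteps_stepCycle (hx : x ≠ 1) (hy : y ≠ 1) (hz : z ≠ 1) (hxyz : z * y * x = 1)
    (g : G) : cycleSteps (stepCycle g (x, y, z)) g = (x, y, z) := by
  obtain ⟨h₁, h₂, h₃⟩ := steps_points_ne hx hy hz hxyz g
  obtain ⟨hp, hq, -⟩ := formPerm_triple_apply h₁ h₂ h₃
  have hz' : z = (y * x)⁻¹ := eq_inv_of_mul_eq_one_left (by rwa [mul_assoc] at hxyz)
  simp only [cycleSteps, stepCycle, hp, hq, hz', Prod.mk.injEq]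
  refine ⟨?_, ?_, ?_⟩ <;> group

variable [Fintype G]

lemma stepCycle_cycleSteps {σ : Perm G} (hσ : σ.IsThreeCycle) {g : G} (hg : g ∈ σ.support) :
    stepCycle g (cycleSteps σ g) = σ := by
  simpa only [stepCycle, cycleSteps, inv_mul_cancel_right] using hσ.formPerm_eq hg

lemma mem_support_stepCycle (hx : x ≠ 1) (hy : y ≠ 1) (hz : z ≠ 1) (hxyz : z * y * x = 1)
    (g : G) : g ∈ (stepCycle g (x, y, z)).support := by
  obtain ⟨h₁, h₂, h₃⟩ := steps_points_ne hx hy hz hxyz g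
  rw [mem_support, stepCycle, (formPerm_triple_apply h₁ h₂ h₃).1]
  exact h₁.symm

lemma permWeight_formPerm {p q r : G} (hpq : p ≠ q) (hpr : p ≠ r) (hqr : q ≠ r) :
    permWeight (List.formPerm [p, q, r]) =
      Finsupp.single 1 (Fintype.card G - 3) + tripleWeight (q * p⁻¹) (r * q⁻¹) (p * r⁻¹) := by
  obtain ⟨hp, hq, hr⟩ := formPerm_triple_apply hpq hpr hqr
  have hfix : ∀ g ∈ ({p, q, r} : Finset G)ᶜ,
      Finsupp.single (List.formPerm [p, q, r] g * g⁻¹) 1 = Finsupp.single 1 1 := by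
    intro g hg
    rw [List.formPerm_apply_of_notMem (by simpa using hg), mul_inv_cancel]
  rw [permWeight, ← sum_compl_add_sum {p, q, r}, sum_congr rfl hfix, sum_const, card_compl,
    Finsupp.smul_single, smul_eq_mul, mul_one, sum_insert (by simp [hpq, hpr]),
    sum_insert (by simp [hqr]), sum_singleton, hp, hq, hr, tripleWeight, add_assoc]
  simp [hpq, hpr, hqr]

lemma permWeight_stepCycle (hx : x ≠ 1) (hy : y ≠ 1) (hz : z ≠ 1) (hxyz : z * y * x = 1)
    (g : G) :
    permWeight (stepCycle g (x, y, z)) =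
      Finsupp.single 1 (Fintype.card G - 3) + tripleWeight x y z := by
  obtain ⟨h₁, h₂, h₃⟩ := steps_points_ne hx hy hz hxyz g
  have hz' : z = (y * x)⁻¹ := eq_inv_of_mul_eq_one_left (by rwa [mul_assoc] at hxyz)
  rw [stepCycle, permWeight_formPerm h₁ h₂ h₃, hz']
  congr 2 <;> group

end Steps

section Counting

variable {G : Type*} [Group G] [Fintype G] [DecidableEq G]

open Equiv Perm

lemma ne_one_of_mem_cycleTriples {a b c : G} (ha : a ≠ 1) (hb : b ≠ 1) (hc : c ≠ 1)
    {t : G × G × G} (ht : t ∈ cycleTriples (tripleWeight a b c)) :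
    t.1 ≠ 1 ∧ t.2.1 ≠ 1 ∧ t.2.2 ≠ 1 := by
  have h := congr($((mem_filter.mp ht).2.2) 1)
  simpa [tripleWeight, Finsupp.single_apply, ha.symm, hb.symm, hc.symm, and_assoc] using h

lemma cycleSteps_mem_cycleTriples {σ : Perm G} (hσ : σ.IsThreeCycle) {g : G}
    (hg : g ∈ σ.support) {W : G →₀ ℕ}
    (hW : permWeight σ = Finsupp.single 1 (Fintype.card G - 3) + W) :
    cycleSteps σ g ∈ cycleTriples W := by
  obtain ⟨h₁, h₂, h₃⟩ := hσ.points_ne hg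
  have hσW := permWeight_formPerm h₁ h₂ h₃
  rw [hσ.formPerm_eq hg, hW] at hσW
  refine mem_filter.mpr ⟨mem_univ _, ?_, (add_left_cancel hσW).symm⟩
  simp only [cycleSteps]
  group

lemma three_mul_card_permsOfWeight {a b c : G} (ha : a ≠ 1) (hb : b ≠ 1) (hc : c ≠ 1) :
    3 * #(permsOfWeight (Finsupp.single 1 (Fintype.card G - 3) + tripleWeight a b c)) =
      Fintype.card G * #(cycleTriples (tripleWeight a b c)) := by
  set K := permsOfWeight (Finsupp.single 1 (Fintype.card G - 3) + tripleWeight a b c)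
  have hK (σ : Perm G) (hσ : σ ∈ K) : σ.IsThreeCycle :=
    isThreeCycle_of_mem_permsOfWeight ha hb hc hσ
  calc 3 * #K = #(K.sigma fun σ => σ.support) := by
        rw [card_sigma, sum_congr rfl fun σ hσ => (hK σ hσ).card_support, sum_const, smul_eq_mul,
          mul_comm]
    _ = #(univ ×ˢ cycleTriples (tripleWeight a b c)) := by
      refine card_nbij' (fun s => (s.2, cycleSteps s.1 s.2)) (fun t => ⟨stepCycle t.1 t.2, t.1⟩)
        ?_ ?_ ?_ ?_
      · rintro ⟨σ, g⟩ h
        simp only [coe_sigma, Set.mem_sigma_iff, mem_coe] at h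
        exact mem_product.mpr
          ⟨mem_univ _, cycleSteps_mem_cycleTriples (hK σ h.1) h.2 (mem_permsOfWeight.mp h.1)⟩
      · rintro ⟨g, x, y, z⟩ h
        simp only [coe_product, coe_univ, Set.mem_prod, Set.mem_univ, mem_coe, true_and] at h
        obtain ⟨hx, hy, hz⟩ := ne_one_of_mem_cycleTriples ha hb hc h
        obtain ⟨-, hxyz, hW⟩ := mem_filter.mp h
        simp only [coe_sigma, Set.mem_sigma_iff, mem_coe, K, mem_permsOfWeight]
        exact ⟨by rw [permWeight_stepCycle hx hy hz hxyz, hW], mem_support_stepCycle hx hy hz hxyz g⟩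
      · rintro ⟨σ, g⟩ h
        simp only [coe_sigma, Set.mem_sigma_iff, mem_coe] at h
        simp only [stepCycle_cycleSteps (hK σ h.1) h.2]
      · rintro ⟨g, x, y, z⟩ h
        simp only [coe_product, coe_univ, Set.mem_prod, Set.mem_univ, mem_coe, true_and] at h
        obtain ⟨hx, hy, hz⟩ := ne_one_of_mem_cycleTriples ha hb hc h
        simp only [cycleSteps_stepCycle hx hy hz (mem_filter.mp h).2.1]
    _ = Fintype.card G * #(cycleTriples (tripleWeight a b c)) := by rw [card_product, card_univ]

end Counting

section Coefficients

variable {G : Type*} [Group G] [Fintype G]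

open Equiv Perm MvPolynomial

lemma prod_X_eq_monomial_permWeight (R : Type*) [CommRing R] (σ : Perm G) :
    ∏ g, (X (σ g * g⁻¹) : MvPolynomial G R) = monomial (permWeight σ) 1 := by
  simp only [permWeight, monomial_sum_one, X]

variable [DecidableEq G]

lemma coeff_genGroupDet (R : Type*) [CommRing R] (S : Set G) (d : S →₀ ℕ) :
    (genGroupDet R G S).coeff d =
      ∑ σ ∈ permsOfWeight (d.mapDomain Subtype.val), ((sign σ : ℤ) : R) := by
  rw [← coeff_rename_mapDomain _ Subtype.val_injective, genGroupDet,
    Subsingleton.elim (Fintype.ofFinite G) ‹_›,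
    Subsingleton.elim (fun a b => Classical.propDecidable (a = b) : DecidableEq G) ‹_›,
    AlgHom.map_det, Matrix.det_apply, coeff_sum, permsOfWeight, sum_filter]
  refine sum_congr rfl fun σ _ => ?_
  rw [coeff_smul, Units.smul_def, zsmul_eq_mul]
  by_cases hS : ∀ g, σ g * g⁻¹ ∈ S
  · simp only [AlgHom.mapMatrix_apply, Matrix.map_apply, Matrix.of_apply, dif_pos (hS _),
      rename_X, prod_X_eq_monomial_permWeight, coeff_monomial]
    split_ifs <;> simp
  · push Not at hS
    obtain ⟨g, hg⟩ := hS
    have hd : permWeight σ ≠ d.mapDomain Subtype.val := by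
      intro h
      have := congr($h (σ g * g⁻¹))
      rw [Finsupp.mapDomain_of_notMem_range _ _ (by simpa using hg), permWeight_apply] at this
      exact (card_ne_zero.mpr ⟨g, by simp⟩) this
    rw [prod_eq_zero (mem_univ g) (by simp [hg]), coeff_zero, mul_zero, if_neg hd]

lemma three_mul_coeff_genGroupDet (R : Type*) [CommRing R] (S : Set G) (h1S : (1 : G) ∈ S)
    {a b c : S} (ha : (a : G) ≠ 1) (hb : (b : G) ≠ 1) (hc : (c : G) ≠ 1) :
    3 * (genGroupDet R G S).coeff (Finsupp.single ⟨1, h1S⟩ (Fintype.card G - 3) +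
        Finsupp.single a 1 + Finsupp.single b 1 + Finsupp.single c 1) =
      Fintype.card G * #(cycleTriples (tripleWeight (a : G) b c)) := by
  have hd : Finsupp.mapDomain Subtype.val (Finsupp.single (⟨1, h1S⟩ : S) (Fintype.card G - 3) +
      Finsupp.single a 1 + Finsupp.single b 1 + Finsupp.single c 1) =
        Finsupp.single 1 (Fintype.card G - 3) + tripleWeight (a : G) b c := by
    simp only [Finsupp.mapDomain_add, Finsupp.mapDomain_single, tripleWeight, add_assoc]
  have hsign (σ : Perm G)
      (hσ : σ ∈ permsOfWeight (Finsupp.single 1 (Fintype.card G - 3) + tripleWeight (a : G) b c)) :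
      ((sign σ : ℤ) : R) = 1 := by
    simp [(isThreeCycle_of_mem_permsOfWeight ha hb hc hσ).sign]
  rw [coeff_genGroupDet, hd, sum_congr rfl hsign, sum_const, nsmul_one]
  simpa using congr((↑$(three_mul_card_permsOfWeight ha hb hc) : R))

end Coefficients

/-- If `a, b, c ∈ S` are all `≠ e` and the monomial `x_e^{n-3} x_a x_b x_c` occurs in the
generalized group determinant `Θ_G(S)` (`n = |G|`), then its coefficient is: `n/3` if
`a = b = c`; `n` if exactly two of them are equal; `n` if they are pairwise distinct and
`ab ≠ ba`; and `2n` if they are pairwise distinct and `ab = ba`. -/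
theorem coeff_genGroupDet_cases {G : Type*} [Group G] [Fintype G]
    (S : Set G) (h1S : (1 : G) ∈ S) (a b c : S)
    (ha : (a : G) ≠ 1) (hb : (b : G) ≠ 1) (hc : (c : G) ≠ 1)
    (hocc : MvPolynomial.coeff
      (Finsupp.single (⟨1, h1S⟩ : S) (Fintype.card G - 3) +
        Finsupp.single a 1 + Finsupp.single b 1 + Finsupp.single c 1)
      (genGroupDet ℂ G S) ≠ 0) :
    (a = b ∧ b = c →
      MvPolynomial.coeff
        (Finsupp.single (⟨1, h1S⟩ : S) (Fintype.card G - 3) +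
          Finsupp.single a 1 + Finsupp.single b 1 + Finsupp.single c 1)
        (genGroupDet ℂ G S) = (Fintype.card G : ℂ) / 3) ∧
    ((a = b ∧ a ≠ c) ∨ (a = c ∧ a ≠ b) ∨ (b = c ∧ a ≠ b) →
      MvPolynomial.coeff
        (Finsupp.single (⟨1, h1S⟩ : S) (Fintype.card G - 3) +
          Finsupp.single a 1 + Finsupp.single b 1 + Finsupp.single c 1)
        (genGroupDet ℂ G S) = (Fintype.card G : ℂ)) ∧
    (a ≠ b → a ≠ c → b ≠ c → (a : G) * b ≠ (b : G) * a →
      MvPolynomial.coeff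
        (Finsupp.single (⟨1, h1S⟩ : S) (Fintype.card G - 3) +
          Finsupp.single a 1 + Finsupp.single b 1 + Finsupp.single c 1)
        (genGroupDet ℂ G S) = (Fintype.card G : ℂ)) ∧
    (a ≠ b → a ≠ c → b ≠ c → (a : G) * b = (b : G) * a →
      MvPolynomial.coeff
        (Finsupp.single (⟨1, h1S⟩ : S) (Fintype.card G - 3) +
          Finsupp.single a 1 + Finsupp.single b 1 + Finsupp.single c 1)
        (genGroupDet ℂ G S) = 2 * (Fintype.card G : ℂ)) := by
  classical
  have key := three_mul_coeff_genGroupDet ℂ S h1S ha hb hc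
  have hne : (cycleTriples (tripleWeight (a : G) b c)).Nonempty :=
    nonempty_iff_ne_empty.mpr fun h => hocc (by simpa [h] using key)
  refine ⟨?_, ?_, ?_, ?_⟩
  · rintro ⟨rfl, rfl⟩
    rw [card_cycleTriples_self hne] at key
    linear_combination key / 3
  · rintro (⟨rfl, hac⟩ | ⟨rfl, hab⟩ | ⟨rfl, hab⟩)
    · rw [card_cycleTriples_of_ne (Subtype.coe_ne_coe.mpr hac) hne] at key
      linear_combination key / 3
    · rw [tripleWeight_comm₂₃] at hne key
      rw [card_cycleTriples_of_ne (Subtype.coe_ne_coe.mpr hab) hne] at key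
      linear_combination key / 3
    · rw [tripleWeight_comm₁₂, tripleWeight_comm₂₃] at hne key
      rw [card_cycleTriples_of_ne (Subtype.coe_ne_coe.mpr hab.symm) hne] at key
      linear_combination key / 3
  · intro hab hac hbc hcomm
    rw [card_cycleTriples_of_not_commute (Subtype.coe_ne_coe.mpr hab) (Subtype.coe_ne_coe.mpr hac)
      (Subtype.coe_ne_coe.mpr hbc) hcomm hne] at key
    linear_combination key / 3
  · intro hab hac hbc hcomm
    rw [card_cycleTriples_of_commute (Subtype.coe_ne_coe.mpr hab) (Subtype.coe_ne_coe.mpr hac)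
      (Subtype.coe_ne_coe.mpr hbc) hcomm hne] at key
    linear_combination key / 3
end
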